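/- arXiv:1512.07043 — 8 statements merged into one kernel-verified Lean document; each statement's English description precedes it below -/
import Mathlib

section
/- A Metzler matrix A is Hurwitz stable if and only if there exists a vector v with all entries positive such that vᵀA has all entries negative. -/
/-!
(⇐) Conjugating `Aᵀ` by `diag v` gives a Metzler matrix with negative row sums, which has the
same characteristic polynomial as `A`; Gershgorin's theorem then puts every eigenvalue in a disc
`‖μ - b‖ ≤ r` with `b + r < 0`.

(⇒) For small `ε > 0` the matrix `P = 1 + εA` is entrywise nonnegative and its spectrum
`1 + εσ(A)` lies in the open unit disc, so `Pᵏ → 0` by Gelfand's formula. Then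
`w = ∑_{k<K} 𝟙ᵀPᵏ` satisfies `wᵀP = w - 𝟙 + 𝟙ᵀPᴷ < w` for large `K`,
and `0 ≤ wᵀP` forces `w > 0`; finally `wᵀA = (wᵀP - w) / ε < 0`.
-/

open Matrix

def IsMetzler {n : ℕ} (A : Matrix (Fin n) (Fin n) ℝ) : Prop :=
  ∀ i j, i ≠ j → 0 ≤ A i j

def IsHurwitz {n : ℕ} (A : Matrix (Fin n) (Fin n) ℝ) : Prop :=
  ∀ μ ∈ spectrum ℂ (A.map (Complex.ofReal)), μ.re < 0

open Filter Topology Finset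

theorem Matrix.charpoly_diagonal_inv_mul_mul_diagonal {ι K : Type*} [Fintype ι] [DecidableEq ι]
    [Field K] (M : Matrix ι ι K) {d : ι → K} (hd : ∀ i, d i ≠ 0) :
    (diagonal (fun i => (d i)⁻¹) * M * diagonal d).charpoly = M.charpoly := by
  rw [mul_assoc, charpoly_mul_comm, mul_assoc, diagonal_mul_diagonal]
  simp [hd]

theorem spectrum.exists_eq_one_add_mul_of_mem {K A : Type*} [Field K] [Ring A] [Algebra K A]
    {a : A} {c : K} (hc : c ≠ 0) {z : K} (hz : z ∈ spectrum K (1 + c • a)) :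
    ∃ μ ∈ spectrum K a, z = 1 + c * μ := by
  refine ⟨c⁻¹ * (z - 1), ?_, by field_simp; ring⟩
  have h1 : z - 1 + 1 ∈ spectrum K (algebraMap K A 1 + c • a) := by simpa using hz
  rw [spectrum.add_mem_add_iff] at h1
  have h2 : Units.mk0 c hc • (c⁻¹ * (z - 1)) ∈ spectrum K (Units.mk0 c hc • a) := by
    simpa [Units.smul_def, mul_inv_cancel_left₀ hc] using h1
  exact spectrum.smul_mem_smul_iff.mp h2

theorem tendsto_pow_nhds_zero_of_forall_spectrum_nnnorm_lt_one {A : Type*} [NormedRing A]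
    [NormedAlgebra ℂ A] [CompleteSpace A] (a : A) (h : ∀ z ∈ spectrum ℂ a, ‖z‖₊ < 1) :
    Tendsto (a ^ ·) atTop (𝓝 0) := by
  nontriviality A
  obtain ⟨r, hρr, hr1⟩ := ENNReal.lt_iff_exists_nnreal_btwn.mp
    (spectrum.spectralRadius_lt_of_forall_lt a h)
  have hbound : ∀ᶠ k : ℕ in atTop, ‖a ^ k‖₊ ≤ r ^ k := by
    filter_upwards [(spectrum.pow_nnnorm_pow_one_div_tendsto_nhds_spectralRadius
      a).eventually_lt_const hρr, eventually_gt_atTop 0] with k hk hk0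
    rw [one_div, ← ENNReal.coe_rpow_of_nonneg _ (by positivity), ENNReal.coe_lt_coe,
      NNReal.rpow_inv_lt_iff (by positivity), NNReal.rpow_natCast] at hk
    exact hk.le
  refine tendsto_zero_iff_norm_tendsto_zero.mpr (squeeze_zero' (.of_forall fun _ => norm_nonneg _)
    ?_ (tendsto_pow_atTop_nhds_zero_of_lt_one r.coe_nonneg (by exact_mod_cast hr1)))
  filter_upwards [hbound] with k hk
  exact_mod_cast hk

section

-- The ℓ∞ operator norm makes matrices a Banach algebra whose topology is the product topology.
attribute [local instance] Matrix.linftyOpNormedRing Matrix.linftyOpNormedAlgebra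

theorem Matrix.tendsto_pow_nhds_zero_of_forall_spectrum_nnnorm_lt_one {ι : Type*} [Fintype ι]
    [DecidableEq ι] (P : Matrix ι ι ℝ)
    (h : ∀ z ∈ spectrum ℂ (P.map Complex.ofReal), ‖z‖₊ < 1) :
    Tendsto (P ^ ·) atTop (𝓝 0) := by
  have : CompleteSpace (Matrix ι ι ℂ) := FiniteDimensional.complete ℂ _
  have hre := (Continuous.matrix_map continuous_id Complex.continuous_re).tendsto 0 |>.comp
    (_root_.tendsto_pow_nhds_zero_of_forall_spectrum_nnnorm_lt_one _ h)
  convert hre using 2 with k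
  · have hk : P.map Complex.ofReal ^ k = (P ^ k).map Complex.ofReal :=
      (map_pow Complex.ofRealHom.mapMatrix P k).symm
    ext i j
    simp [hk]
  · simp

end

theorem Matrix.exists_pos_vecMul_lt_of_tendsto_pow {ι : Type*} [Fintype ι] [DecidableEq ι]
    {P : Matrix ι ι ℝ} (hP : ∀ i j, 0 ≤ P i j) (hlim : Tendsto (P ^ ·) atTop (𝓝 0)) :
    ∃ w : ι → ℝ, (∀ i, 0 < w i) ∧ ∀ j, (w ᵥ* P) j < w j := by
  have hsmall : ∀ᶠ K in atTop, ∀ j, (1 ᵥ* P ^ K) j < 1 := by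
    have hc : Continuous fun M : Matrix ι ι ℝ => 1 ᵥ* M :=
      continuous_const.matrix_vecMul continuous_id
    have h0 := (hc.tendsto 0).comp hlim
    rw [vecMul_zero] at h0
    exact eventually_all.mpr fun j => (tendsto_pi_nhds.mp h0 j).eventually_lt_const one_pos
  obtain ⟨K, hK⟩ := hsmall.exists
  set w : ι → ℝ := ∑ k ∈ range K, 1 ᵥ* P ^ k
  have htele : w ᵥ* P + 1 = w + 1 ᵥ* P ^ K := by
    have := (sum_range_succ' (fun k => 1 ᵥ* P ^ k) K).symm.trans (sum_range_succ _ K)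
    simpa [w, sum_vecMul, vecMul_vecMul, pow_succ] using this
  have hw : ∀ i, 0 ≤ w i := fun i => by
    simp only [w, Finset.sum_apply]
    exact sum_nonneg fun k _ => sum_nonneg fun l _ => by
      simpa using pow_apply_nonneg hP k l i
  have hlt : ∀ j, (w ᵥ* P) j < w j := fun j => by
    have := congrFun htele j
    simp only [Pi.add_apply, Pi.one_apply] at this
    linarith [hK j]
  refine ⟨w, fun i => ?_, hlt⟩
  have : 0 ≤ (w ᵥ* P) i := sum_nonneg fun l _ => mul_nonneg (hw l) (hP l i)
  linarith [hlt i]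

theorem Complex.eventually_norm_one_add_mul_lt_one {μ : ℂ} (hμ : μ.re < 0) :
    ∀ᶠ ε : ℝ in 𝓝[>] 0, ‖1 + ε * μ‖ < 1 := by
  have hlim : Tendsto (fun ε : ℝ => 2 * μ.re + ε * normSq μ) (𝓝[>] 0) (𝓝 (2 * μ.re)) := by
    have hc : Continuous fun ε : ℝ => 2 * μ.re + ε * normSq μ := by fun_prop
    exact (hc.tendsto' 0 _ (by simp)).mono_left nhdsWithin_le_nhds
  filter_upwards [self_mem_nhdsWithin, hlim.eventually_lt_const (show 2 * μ.re < 0 by linarith)]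
    with ε hε hneg
  have hsq : normSq (1 + ε * μ) = 1 + ε * (2 * μ.re + ε * normSq μ) := by
    simp [normSq_apply]; ring
  have hlt : normSq (1 + ε * μ) < 1 := by
    rw [hsq]; nlinarith [mul_neg_of_pos_of_neg (Set.mem_Ioi.mp hε) hneg]
  exact (sq_lt_one_iff₀ (norm_nonneg _)).mp (normSq_eq_norm_sq _ ▸ hlt)

theorem isHurwitz_iff_of_charpoly_eq {n : ℕ} {A B : Matrix (Fin n) (Fin n) ℝ}
    (h : A.charpoly = B.charpoly) : IsHurwitz A ↔ IsHurwitz B := by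
  have hmap (M : Matrix (Fin n) (Fin n) ℝ) :
      (M.map Complex.ofReal).charpoly = M.charpoly.map Complex.ofRealHom :=
    M.charpoly_map Complex.ofRealHom
  simp only [IsHurwitz, mem_spectrum_iff_isRoot_charpoly, hmap, h]

namespace IsMetzler

variable {n : ℕ}

theorem isHurwitz_of_forall_sum_neg {B : Matrix (Fin n) (Fin n) ℝ} (hM : IsMetzler B)
    (hrow : ∀ i, ∑ j, B i j < 0) : IsHurwitz B := by
  intro μ hμ
  obtain ⟨k, hk⟩ := eigenvalue_mem_ball (A := B.map Complex.ofReal)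
    (Module.End.hasEigenvalue_iff_mem_spectrum.mpr (by rwa [spectrum_toLin']))
  rw [Metric.mem_closedBall, dist_eq_norm] at hk
  have hoff : ∑ j ∈ univ.erase k, ‖B.map Complex.ofReal k j‖ = ∑ j ∈ univ.erase k, B k j :=
    sum_congr rfl fun j hj => by simp [abs_of_nonneg (hM k j (ne_of_mem_erase hj).symm)]
  have hdiag := add_sum_erase univ (B k ·) (mem_univ k)
  calc μ.re = B k k + (μ - B.map Complex.ofReal k k).re := by simp
    _ ≤ B k k + ‖μ - B.map Complex.ofReal k k‖ := by gcongr; exact Complex.re_le_norm _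
    _ ≤ B k k + ∑ j ∈ univ.erase k, B k j := by gcongr; exact hoff ▸ hk
    _ < 0 := hdiag ▸ hrow k

theorem isHurwitz_of_pos_vecMul_neg {A : Matrix (Fin n) (Fin n) ℝ} (hM : IsMetzler A)
    {v : Fin n → ℝ} (hv : ∀ i, 0 < v i) (hvA : ∀ j, (v ᵥ* A) j < 0) : IsHurwitz A := by
  set B := diagonal (fun i => (v i)⁻¹) * Aᵀ * diagonal v
  have hB : ∀ i j, B i j = (v i)⁻¹ * (A j i * v j) := fun i j => by
    simp [B, diagonal_mul, mul_diagonal, mul_assoc]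
  have hBM : IsMetzler B := fun i j hij => by
    rw [hB]; exact mul_nonneg (inv_pos.mpr (hv i)).le (mul_nonneg (hM j i hij.symm) (hv j).le)
  have hrow : ∀ i, ∑ j, B i j < 0 := fun i => by
    simp_rw [hB, ← mul_sum]
    refine mul_neg_of_pos_of_neg (inv_pos.mpr (hv i)) ?_
    simpa [vecMul, dotProduct, mul_comm] using hvA i
  refine (isHurwitz_iff_of_charpoly_eq ?_).mpr (hBM.isHurwitz_of_forall_sum_neg hrow)
  rw [charpoly_diagonal_inv_mul_mul_diagonal _ fun i => (hv i).ne', charpoly_transpose]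

theorem eventually_one_add_smul_nonneg {A : Matrix (Fin n) (Fin n) ℝ} (hM : IsMetzler A) :
    ∀ᶠ ε : ℝ in 𝓝[>] 0, ∀ i j, 0 ≤ (1 + ε • A) i j := by
  refine eventually_all.mpr fun i => eventually_all.mpr fun j => ?_
  rcases eq_or_ne i j with rfl | hij
  · have hlim : Tendsto (fun ε : ℝ => 1 + ε * A i i) (𝓝[>] 0) (𝓝 1) := by
      have hc : Continuous fun ε : ℝ => 1 + ε * A i i := by fun_prop
      exact (hc.tendsto' 0 _ (by simp)).mono_left nhdsWithin_le_nhds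
    filter_upwards [hlim.eventually_const_lt one_pos] with ε hε
    simpa using hε.le
  · filter_upwards [self_mem_nhdsWithin] with ε hε
    simpa [one_apply_ne hij] using mul_nonneg (le_of_lt hε) (hM i j hij)

theorem exists_pos_vecMul_neg_of_isHurwitz {A : Matrix (Fin n) (Fin n) ℝ} (hM : IsMetzler A)
    (hH : IsHurwitz A) : ∃ v : Fin n → ℝ, (∀ i, 0 < v i) ∧ ∀ j, (v ᵥ* A) j < 0 := by
  have hspec : ∀ᶠ ε : ℝ in 𝓝[>] 0, ∀ μ ∈ spectrum ℂ (A.map Complex.ofReal), ‖1 + ε * μ‖ < 1 :=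
    (eventually_all_finite (finite_spectrum _)).mpr fun μ hμ =>
      Complex.eventually_norm_one_add_mul_lt_one (hH μ hμ)
  obtain ⟨ε, hε, hP, hdisc⟩ :=
    (eventually_mem_nhdsWithin.and (hM.eventually_one_add_smul_nonneg.and hspec)).exists
  set P := 1 + ε • A
  have hPc : P.map Complex.ofReal = 1 + (ε : ℂ) • A.map Complex.ofReal := by
    ext i j; by_cases h : i = j <;> simp [P, one_apply, h]
  have hlim : Tendsto (P ^ ·) atTop (𝓝 0) := by
    refine P.tendsto_pow_nhds_zero_of_forall_spectrum_nnnorm_lt_one fun z hz => ?_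
    rw [hPc] at hz
    obtain ⟨μ, hμ, rfl⟩ :=
      spectrum.exists_eq_one_add_mul_of_mem (Complex.ofReal_ne_zero.mpr hε.ne') hz
    exact_mod_cast hdisc μ hμ
  obtain ⟨w, hw, hwP⟩ := exists_pos_vecMul_lt_of_tendsto_pow hP hlim
  refine ⟨w, hw, fun j => neg_of_mul_neg_right ?_ (le_of_lt hε)⟩
  have hwPj : (w ᵥ* P) j = w j + ε * (w ᵥ* A) j := by simp [P, vecMul_add, vecMul_smul]
  linarith [hwP j]

end IsMetzler

/-- A Metzler matrix is Hurwitz stable iff there is a positive vector `v`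
with `vᵀA` componentwise negative. -/
theorem metzler_hurwitz_iff_exists_pos_vec {n : ℕ} (A : Matrix (Fin n) (Fin n) ℝ)
    (hM : IsMetzler A) :
    IsHurwitz A ↔ ∃ v : Fin n → ℝ, (∀ i, 0 < v i) ∧ ∀ j, (v ᵥ* A) j < 0 :=
  ⟨hM.exists_pos_vecMul_neg_of_isHurwitz,
    fun ⟨_, hv, hvA⟩ => hM.isHurwitz_of_pos_vecMul_neg hv hvA⟩
end

section
/- A Metzler matrix A is Hurwitz stable if and only if A is nonsingular and all entries of A⁻¹ are nonpositive. -/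
open Matrix

/-!
For `s` large, `A + s • 1` is entrywise nonnegative. If `A` is Hurwitz, then for `s` large the
spectrum of `C = s⁻¹ • (A + s • 1)` also lies in the open unit disc, so by Gelfand's formula the
Neumann series `∑ Cᵏ` converges to `(1 - C)⁻¹ = -s • A⁻¹`, which is entrywise nonnegative.
Conversely, if `A v = μ v` with `v ≠ 0` and `0 ≤ re μ`, the Metzler property gives
`0 ≤ (re μ) |v| ≤ A |v|` entrywise, so `|v| = A⁻¹ (A |v|) ≤ 0`, a contradiction.
-/

open Filter

theorem spectrum.summable_pow_of_forall_norm_lt_one {A : Type*} [NormedRing A]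
    [NormedAlgebra ℂ A] [CompleteSpace A] {a : A} (h : ∀ z ∈ spectrum ℂ a, ‖z‖ < 1) :
    Summable (a ^ ·) := by
  cases subsingleton_or_nontrivial A
  · exact summable_zero.congr fun k => Subsingleton.elim _ _
  have hρ : spectralRadius ℂ a < 1 :=
    spectrum.spectralRadius_lt_of_forall_lt a fun z hz => by exact_mod_cast h z hz
  obtain ⟨r, hρr, hr1⟩ := ENNReal.lt_iff_exists_nnreal_btwn.1 hρ
  have hpow : ∀ᶠ k : ℕ in atTop, ‖a ^ k‖ ≤ r ^ k := by
    filter_upwards [(spectrum.pow_norm_pow_one_div_tendsto_nhds_spectralRadius a).eventually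
      (gt_mem_nhds hρr), eventually_ge_atTop 1] with k hk hk1
    have hk' : ‖a ^ k‖ ^ (k : ℝ)⁻¹ < r := by
      rw [one_div] at hk
      exact (ENNReal.ofReal_lt_iff_lt_toReal (by positivity) ENNReal.coe_ne_top).1 hk
    exact_mod_cast
      ((Real.rpow_inv_lt_iff_of_pos (norm_nonneg (a ^ k)) r.2 (Nat.cast_pos.2 hk1)).1 hk').le
  exact .of_norm_bounded_eventually_nat (summable_geometric_of_lt_one r.2 (mod_cast hr1)) hpow

theorem spectrum.mem_smul_algebraMap_add_iff {𝕜 A : Type*} [Field 𝕜] [Ring A] [Algebra 𝕜 A]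
    {a : A} {c d z : 𝕜} (hc : c ≠ 0) :
    z ∈ spectrum 𝕜 (c • (algebraMap 𝕜 A d + a)) ↔ c⁻¹ * z - d ∈ spectrum 𝕜 a := by
  have := spectrum.smul_mem_smul_iff (a := algebraMap 𝕜 A d + a) (s := c⁻¹ * z)
    (r := Units.mk0 c hc)
  rw [← spectrum.add_mem_add_iff (r := c⁻¹ * z - d) (s := d), sub_add_cancel]
  simpa [Units.smul_def, hc] using this

theorem IsCompact.eventually_forall_norm_add_lt {S : Set ℂ} (hS : IsCompact S)
    (hS_re : ∀ μ ∈ S, μ.re < 0) : ∀ᶠ s : ℝ in atTop, ∀ μ ∈ S, ‖μ + s‖ < s := by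
  -- `‖μ + s‖² = ‖μ‖² + 2 s re μ + s²`, so any `s` above `sup_S ‖μ‖² / (-2 re μ)` works.
  obtain ⟨B, hB⟩ := hS.bddAbove_image (f := fun μ : ℂ => ‖μ‖ ^ 2 / (-2 * μ.re))
    (ContinuousOn.div (by fun_prop) (by fun_prop) fun μ hμ =>
      (by linarith [hS_re μ hμ] : (0 : ℝ) < -2 * μ.re).ne')
  filter_upwards [eventually_gt_atTop (max B 0)] with s hs μ hμ
  have hre := hS_re μ hμ
  have hμB : ‖μ‖ ^ 2 / (-2 * μ.re) ≤ B := hB ⟨μ, hμ, rfl⟩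
  rw [div_le_iff₀ (by linarith)] at hμB
  have hsq : ‖μ + s‖ ^ 2 = ‖μ‖ ^ 2 + 2 * s * μ.re + s ^ 2 := by
    simp only [Complex.sq_norm, Complex.normSq_apply, Complex.add_re, Complex.add_im,
      Complex.ofReal_re, Complex.ofReal_im]
    ring
  have hs0 : 0 < s := lt_of_le_of_lt (le_max_right _ _) hs
  refine lt_of_pow_lt_pow_left₀ 2 hs0.le ?_
  nlinarith [le_max_left B 0]

-- Any Banach algebra norm on matrices serves for Gelfand's formula; summability only sees the
-- product topology.
attribute [local instance] Matrix.linftyOpNormedRing Matrix.linftyOpNormedAlgebra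

namespace Matrix

variable {ι : Type*} [Fintype ι] [DecidableEq ι]

theorem summable_pow_of_spectrum_map_ofReal {M : Matrix ι ι ℝ}
    (h : ∀ z ∈ spectrum ℂ (M.map Complex.ofReal), ‖z‖ < 1) : Summable (M ^ ·) := by
  have hℂ := spectrum.summable_pow_of_forall_norm_lt_one h
  refine Pi.summable.2 fun i => Pi.summable.2 fun j => Complex.summable_ofReal.1 ?_
  have hpow (k : ℕ) : M.map Complex.ofReal ^ k = (M ^ k).map Complex.ofReal :=
    (map_pow Complex.ofRealHom.mapMatrix M k).symm
  simpa [hpow] using Pi.summable.1 (Pi.summable.1 hℂ i) j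

theorem tsum_pow_apply_nonneg {M : Matrix ι ι ℝ} (hM : ∀ i j, 0 ≤ M i j)
    (hsum : Summable (M ^ ·)) (i j : ι) : 0 ≤ (∑' k, M ^ k) i j :=
  (hsum.hasSum.map (entryAddMonoidHom ℝ i j) (continuous_id.matrix_elem i j)).nonneg
    fun k => pow_apply_nonneg hM k i j

theorem exists_mulVec_eq_smul_of_mem_spectrum {K : Type*} [Field K] {M : Matrix ι ι K} {μ : K}
    (h : μ ∈ spectrum K M) : ∃ v ≠ 0, M *ᵥ v = μ • v := by
  rw [← spectrum_toLin', ← Module.End.hasEigenvalue_iff_mem_spectrum] at h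
  obtain ⟨v, hv⟩ := h.exists_hasEigenvector
  exact ⟨v, hv.2, by simpa using hv.apply_eq_smul⟩

end Matrix

namespace IsMetzler

variable {n : ℕ} {A : Matrix (Fin n) (Fin n) ℝ}

theorem eventually_add_smul_one_nonneg (hA : IsMetzler A) :
    ∀ᶠ s : ℝ in atTop, ∀ i j, 0 ≤ (A + s • 1) i j := by
  filter_upwards [eventually_all.2 fun i => eventually_ge_atTop (-A i i)] with s hs i j
  rcases eq_or_ne i j with rfl | hij
  · simpa [neg_le_iff_add_nonneg'] using hs i
  · simpa [one_apply_ne hij] using hA i j hij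

theorem exists_eq_neg_smul_one_sub (hA : IsMetzler A) (hH : IsHurwitz A) :
    ∃ s : ℝ, 0 < s ∧ ∃ C : Matrix (Fin n) (Fin n) ℝ,
      (∀ i j, 0 ≤ C i j) ∧ Summable (C ^ ·) ∧ A = -s • (1 - C) := by
  obtain ⟨s, hs0, hN, hσ⟩ : ∃ s : ℝ, 0 < s ∧ (∀ i j, 0 ≤ (A + s • 1) i j) ∧
      ∀ μ ∈ spectrum ℂ (A.map Complex.ofReal), ‖μ + s‖ < s :=
    (eventually_gt_atTop 0 |>.and <| hA.eventually_add_smul_one_nonneg.and <|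
      (spectrum.isCompact _).eventually_forall_norm_add_lt hH).exists
  set C : Matrix (Fin n) (Fin n) ℝ := s⁻¹ • (A + s • 1)
  have hCℂ : C.map Complex.ofReal =
      (s : ℂ)⁻¹ • (algebraMap ℂ _ (s : ℂ) + A.map Complex.ofReal) := by
    ext i j
    rcases eq_or_ne i j with rfl | hij
    · simp only [C, map_apply, Matrix.add_apply, Matrix.smul_apply, smul_eq_mul, one_apply_eq,
        algebraMap_eq_diagonal, diagonal_apply_eq, Pi.algebraMap_apply, Algebra.algebraMap_self,
        RingHom.id_apply]
      push_cast
      ring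
    · simp [C, algebraMap_eq_diagonal, one_apply_ne hij, diagonal_apply_ne _ hij]
  have hσC : ∀ z ∈ spectrum ℂ (C.map Complex.ofReal), ‖z‖ < 1 := by
    intro z hz
    rw [hCℂ, spectrum.mem_smul_algebraMap_add_iff (inv_ne_zero (mod_cast hs0.ne'))] at hz
    have := hσ _ hz
    rw [inv_inv, sub_add_cancel, norm_mul, Complex.norm_real, Real.norm_of_nonneg hs0.le] at this
    exact (mul_lt_iff_lt_one_right hs0).1 this
  refine ⟨s, hs0, C, fun i j => mul_nonneg (inv_nonneg.2 hs0.le) (hN i j),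
    summable_pow_of_spectrum_map_ofReal hσC, ?_⟩
  rw [smul_sub, smul_smul, neg_mul, mul_inv_cancel₀ hs0.ne', neg_smul, neg_smul, one_smul]
  abel

theorem inv_nonpos_of_isHurwitz (hA : IsMetzler A) (hH : IsHurwitz A) :
    IsUnit A.det ∧ ∀ i j, A⁻¹ i j ≤ 0 := by
  obtain ⟨s, hs0, C, hC, hsum, rfl⟩ := hA.exists_eq_neg_smul_one_sub hH
  have hright : -s • (1 - C) * (-s⁻¹ • ∑' k, C ^ k) = 1 := by
    rw [smul_mul_smul_comm, hsum.one_sub_mul_tsum_pow, neg_mul_neg, mul_inv_cancel₀ hs0.ne',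
      one_smul]
  refine ⟨isUnit_det_of_right_inverse hright, fun i j => ?_⟩
  rw [inv_eq_right_inv hright, Matrix.smul_apply, smul_eq_mul]
  exact mul_nonpos_of_nonpos_of_nonneg (by simpa using hs0.le) (tsum_pow_apply_nonneg hC hsum i j)

theorem re_mul_norm_le_mulVec_norm (hA : IsMetzler A) {μ : ℂ} {v : Fin n → ℂ}
    (hv : A.map Complex.ofReal *ᵥ v = μ • v) (i : Fin n) :
    μ.re * ‖v i‖ ≤ (A *ᵥ fun j => ‖v j‖) i := by
  have hrow : (μ - A i i) * v i = ∑ j ∈ Finset.univ.erase i, (A i j : ℂ) * v j := by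
    have := congrFun hv i
    simp only [mulVec, dotProduct, map_apply, Pi.smul_apply, smul_eq_mul,
      ← Finset.add_sum_erase _ _ (Finset.mem_univ i)] at this
    linear_combination -this
  have hoff : ∀ j ∈ Finset.univ.erase i, ‖(A i j : ℂ) * v j‖ = A i j * ‖v j‖ := fun j hj => by
    rw [norm_mul, Complex.norm_real, Real.norm_of_nonneg (hA i j (Finset.ne_of_mem_erase hj).symm)]
  calc μ.re * ‖v i‖ = (μ - A i i).re * ‖v i‖ + A i i * ‖v i‖ := by
        rw [Complex.sub_re, Complex.ofReal_re]; ring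
    _ ≤ ‖μ - A i i‖ * ‖v i‖ + A i i * ‖v i‖ := by gcongr; exact Complex.re_le_norm _
    _ ≤ ∑ j ∈ Finset.univ.erase i, A i j * ‖v j‖ + A i i * ‖v i‖ := by
      rw [← norm_mul, hrow, ← Finset.sum_congr rfl hoff]
      gcongr
      exact norm_sum_le _ _
    _ = (A *ᵥ fun j => ‖v j‖) i := by
      rw [mulVec, dotProduct, ← Finset.add_sum_erase _ _ (Finset.mem_univ i), add_comm]

theorem isHurwitz_of_inv_nonpos (hA : IsMetzler A) (hdet : IsUnit A.det)
    (hinv : ∀ i j, A⁻¹ i j ≤ 0) : IsHurwitz A := by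
  intro μ hμ
  by_contra! hre
  obtain ⟨v, hv0, hv⟩ := exists_mulVec_eq_smul_of_mem_spectrum hμ
  set w : Fin n → ℝ := fun j => ‖v j‖
  have hAw : ∀ i, 0 ≤ (A *ᵥ w) i := fun i =>
    (mul_nonneg hre (norm_nonneg _)).trans (hA.re_mul_norm_le_mulVec_norm hv i)
  have hw : ∀ i, w i ≤ 0 := fun i => by
    rw [← one_mulVec w, ← nonsing_inv_mul A hdet, ← mulVec_mulVec]
    exact Finset.sum_nonpos (s := Finset.univ) fun j _ =>
      mul_nonpos_of_nonpos_of_nonneg (hinv i j) (hAw j)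
  exact hv0 (funext fun i => norm_le_zero_iff.1 (hw i))

end IsMetzler

/-- A Metzler matrix is Hurwitz stable iff it is nonsingular with entrywise
nonpositive inverse. -/
theorem metzler_hurwitz_iff_inv_nonpos {n : ℕ} (A : Matrix (Fin n) (Fin n) ℝ)
    (hM : IsMetzler A) :
    IsHurwitz A ↔ (IsUnit A.det ∧ ∀ i j, A⁻¹ i j ≤ 0) :=
  ⟨hM.inv_nonpos_of_isHurwitz, fun ⟨hdet, hinv⟩ => hM.isHurwitz_of_inv_nonpos hdet hinv⟩
end

section
/- Let M be an n×n Metzler matrix with entries in {−1,0,1}, negative diagonal, such that its directed graph contains a directed cycle. Then the spectral abscissa of M is nonnegative, so M is not Hurwitz stable. -/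
open Matrix

def EdgeRel {n : ℕ} (M : Matrix (Fin n) (Fin n) ℝ) (j i : Fin n) : Prop :=
  i ≠ j ∧ M i j ≠ 0

/-!
Put `A = M + 1`. The entries of `M` lie in `{-1, 0, 1}` and `M` is Metzler, so `A` is entrywise
nonnegative and every edge `a → b` of `D_M` has `A b a = 1`; a cycle through `i` of length `k`
therefore gives `(A ^ k) i i ≥ 1`.

Suppose every eigenvalue of `M` had negative real part. For large `c` the matrix
`P = 1 + c⁻¹ M` is nonnegative with all eigenvalues in the open unit disc, so by Gelfand's
formula the Neumann series `∑ P ^ m` converges, to a nonnegative `Q` with `(1 - P) Q = 1`.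
Thus `N = c⁻¹ Q ≥ 0` satisfies `N = 1 + A N`, hence `N = 1 + A + ⋯ + A ^ (k - 1) + A ^ k N`,
and the diagonal entry at `i` reads `N i i ≥ 1 + N i i`.
-/

open Filter

theorem summable_norm_pow_of_spectralRadius_lt_one {A : Type*} [NormedRing A]
    [NormedAlgebra ℂ A] [CompleteSpace A] {a : A} (ha : spectralRadius ℂ a < 1) :
    Summable fun n : ℕ => ‖a ^ n‖ := by
  obtain ⟨r, hρr, hr1⟩ := ENNReal.lt_iff_exists_nnreal_btwn.mp ha
  refine Summable.of_norm_bounded_eventually_nat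
    (summable_geometric_of_lt_one r.2 (by exact_mod_cast hr1)) ?_
  filter_upwards [(spectrum.pow_norm_pow_one_div_tendsto_nhds_spectralRadius a).eventually
    (gt_mem_nhds hρr), eventually_ne_atTop 0] with n hn hn0
  rw [ENNReal.ofReal_lt_coe_iff (by positivity)] at hn
  calc ‖‖a ^ n‖‖ = (‖a ^ n‖ ^ (1 / n : ℝ)) ^ n := by
        rw [norm_norm, one_div, Real.rpow_inv_natCast_pow (norm_nonneg _) hn0]
    _ ≤ r ^ n := pow_le_pow_left₀ (by positivity) hn.le n

theorem eq_geom_sum_add_pow_mul {R : Type*} [Semiring R] {a x : R} (h : x = 1 + a * x)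
    (k : ℕ) : x = ∑ j ∈ Finset.range k, a ^ j + a ^ k * x := by
  induction k with
  | zero => simp
  | succ k ih =>
    calc x = ∑ j ∈ Finset.range k, a ^ j + a ^ k * (1 + a * x) := by rw [← h]; exact ih
      _ = _ := by rw [Finset.sum_range_succ, mul_add, mul_one, pow_succ, mul_assoc, add_assoc]

theorem spectrum.one_add_mul_mem_one_add_smul_iff {𝕜 A : Type*} [Field 𝕜] [Ring A]
    [Algebra 𝕜 A] {a : A} {s : 𝕜} (hs : s ≠ 0) {μ : 𝕜} :
    1 + s * μ ∈ spectrum 𝕜 (1 + s • a) ↔ μ ∈ spectrum 𝕜 a := by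
  rw [add_comm (1 : 𝕜), ← map_one (algebraMap 𝕜 A), spectrum.add_mem_add_iff]
  exact spectrum.smul_mem_smul_iff (r := Units.mk0 s hs)

theorem Complex.eventually_norm_one_add_inv_mul_lt_one {μ : ℂ} (hμ : μ.re < 0) :
    ∀ᶠ c : ℝ in atTop, ‖1 + (c : ℂ)⁻¹ * μ‖ < 1 := by
  filter_upwards [eventually_gt_atTop 0,
    eventually_gt_atTop (Complex.normSq μ / (-2 * μ.re))] with c hc hcμ
  have hc' : (c : ℂ) ≠ 0 := by exact_mod_cast hc.ne'
  rw [show 1 + (c : ℂ)⁻¹ * μ = (c : ℂ)⁻¹ * (c + μ) by field_simp, norm_mul, norm_inv,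
    Complex.norm_real, Real.norm_of_nonneg hc.le, inv_mul_lt_one₀ hc]
  rw [div_lt_iff₀ (by linarith)] at hcμ
  have hsq : Complex.normSq (c + μ) < c ^ 2 := by
    simp only [Complex.normSq_apply, Complex.add_re, Complex.ofReal_re, Complex.add_im,
      Complex.ofReal_im, zero_add] at hcμ ⊢
    nlinarith
  rw [← Complex.sq_norm] at hsq
  exact lt_of_pow_lt_pow_left₀ 2 hc.le hsq

namespace Matrix

section OrderedSemiring

variable {ι α : Type*} [Fintype ι] [Semiring α] [PartialOrder α] [IsOrderedRing α]

theorem apply_mul_apply_le_mul_apply {B C : Matrix ι ι α} (hB : ∀ i j, 0 ≤ B i j)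
    (hC : ∀ i j, 0 ≤ C i j) (i l j : ι) : B i l * C l j ≤ (B * C) i j :=
  Finset.single_le_sum (f := fun l => B i l * C l j) (fun l _ => mul_nonneg (hB i l) (hC l j))
    (Finset.mem_univ l)

theorem exists_one_le_pow_apply_of_transGen [DecidableEq ι] {A : Matrix ι ι α}
    (hA : ∀ i j, 0 ≤ A i j) {r : ι → ι → Prop} (hr : ∀ a b, r a b → 1 ≤ A b a) {a b : ι}
    (h : Relation.TransGen r a b) : ∃ k, 0 < k ∧ 1 ≤ (A ^ k) b a := by
  induction h with
  | single hab => exact ⟨1, one_pos, by simpa using hr _ _ hab⟩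
  | @tail b c _ hbc ih =>
    obtain ⟨k, -, hkba⟩ := ih
    refine ⟨k + 1, k.succ_pos, ?_⟩
    calc (1 : α) ≤ A c b * (A ^ k) b a := one_le_mul_of_one_le_of_one_le (hr _ _ hbc) hkba
      _ ≤ (A ^ (k + 1)) c a := by
        rw [pow_succ']; exact apply_mul_apply_le_mul_apply hA (pow_apply_nonneg hA k) c b a

end OrderedSemiring

variable {ι : Type*} [Fintype ι] [DecidableEq ι]

theorem pow_apply_self_lt_one {α : Type*} [CommRing α] [LinearOrder α] [IsStrictOrderedRing α]
    {A N : Matrix ι ι α} (hA : ∀ i j, 0 ≤ A i j) (hN : ∀ i j, 0 ≤ N i j)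
    (h : (1 - A) * N = 1) {k : ℕ} (hk : 0 < k) (i : ι) : (A ^ k) i i < 1 := by
  have hN' : N = 1 + A * N := by rwa [sub_mul, one_mul, sub_eq_iff_eq_add] at h
  have hii := congrFun (congrFun (eq_geom_sum_add_pow_mul hN' k) i) i
  rw [Matrix.add_apply, sum_apply] at hii
  have h0 : (A ^ 0) i i ≤ ∑ j ∈ Finset.range k, (A ^ j) i i :=
    Finset.single_le_sum (fun j _ => pow_apply_nonneg hA j i i) (Finset.mem_range.mpr hk)
  rw [pow_zero, one_apply_eq] at h0
  have hAkN := apply_mul_apply_le_mul_apply (pow_apply_nonneg hA k) hN i i i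
  by_contra! hAk
  nlinarith [mul_le_mul_of_nonneg_right hAk (hN i i)]

attribute [local instance] Matrix.linftyOpNormedRing Matrix.linftyOpNormedAlgebra in
theorem exists_nonneg_one_sub_mul_eq_one {P : Matrix ι ι ℝ} (hP : ∀ i j, 0 ≤ P i j)
    (hσ : ∀ z ∈ spectrum ℂ (P.map Complex.ofReal), ‖z‖ < 1) :
    ∃ Q : Matrix ι ι ℝ, (∀ i j, 0 ≤ Q i j) ∧ (1 - P) * Q = 1 := by
  cases isEmpty_or_nonempty ι
  · exact ⟨0, fun i => isEmptyElim i, Subsingleton.elim _ _⟩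
  have hρ := spectrum.spectralRadius_lt_of_forall_lt (P.map Complex.ofReal) (r := 1)
    fun z hz => by exact_mod_cast hσ z hz
  have hsum : Summable fun m : ℕ => P ^ m := by
    refine Summable.of_norm ((summable_norm_pow_of_spectralRadius_lt_one hρ).congr fun m => ?_)
    have hpow : P.map Complex.ofReal ^ m = (P ^ m).map Complex.ofReal :=
      (map_pow Complex.ofRealHom.mapMatrix P m).symm
    simp [hpow, linfty_opNorm_def]
  refine ⟨∑' m, P ^ m, fun i j => ?_, hsum.one_sub_mul_tsum_pow⟩
  have hQ : HasSum (fun m => (P ^ m) i j) ((∑' m, P ^ m) i j) :=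
    Pi.hasSum.mp (Pi.hasSum.mp hsum.hasSum i) j
  exact hQ.nonneg fun m => pow_apply_nonneg hP m i j

end Matrix

namespace IsMetzler

variable {n : ℕ} {M : Matrix (Fin n) (Fin n) ℝ}

theorem eventually_nonneg_one_add_inv_smul (hM : IsMetzler M) :
    ∀ᶠ c : ℝ in atTop, ∀ i j, 0 ≤ (1 + c⁻¹ • M) i j := by
  simp only [eventually_all]
  intro i j
  filter_upwards [eventually_gt_atTop 0, eventually_ge_atTop (-M i i)] with c hc hci
  rcases eq_or_ne i j with rfl | hij
  · rw [Matrix.add_apply, one_apply_eq, Matrix.smul_apply, smul_eq_mul,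
      show 1 + c⁻¹ * M i i = c⁻¹ * (c + M i i) by field_simp]
    exact mul_nonneg (inv_nonneg.2 hc.le) (by linarith)
  · simpa [one_apply_ne hij] using mul_nonneg (inv_nonneg.2 hc.le) (hM i j hij)

theorem exists_nonneg_neg_mul_eq_one (hM : IsMetzler M)
    (hre : ∀ μ ∈ spectrum ℂ (M.map Complex.ofReal), μ.re < 0) :
    ∃ N : Matrix (Fin n) (Fin n) ℝ, (∀ i j, 0 ≤ N i j) ∧ -M * N = 1 := by
  have hdisc : ∀ᶠ c : ℝ in atTop,
      ∀ μ ∈ spectrum ℂ (M.map Complex.ofReal), ‖1 + (c : ℂ)⁻¹ * μ‖ < 1 :=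
    (finite_spectrum _).eventually_all.2 fun μ hμ =>
      Complex.eventually_norm_one_add_inv_mul_lt_one (hre μ hμ)
  obtain ⟨c, hc, hP, hdisc⟩ :=
    ((eventually_gt_atTop 0).and (hM.eventually_nonneg_one_add_inv_smul.and hdisc)).exists
  have hc' : (c : ℂ) ≠ 0 := by exact_mod_cast hc.ne'
  have hmap : (1 + c⁻¹ • M).map Complex.ofReal = 1 + (c : ℂ)⁻¹ • M.map Complex.ofReal := by
    ext i j
    by_cases h : i = j <;> simp [one_apply, h]
  obtain ⟨Q, hQ, hPQ⟩ := exists_nonneg_one_sub_mul_eq_one hP fun z hz => by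
    have hz' : (c : ℂ) * (z - 1) ∈ spectrum ℂ (M.map Complex.ofReal) := by
      rwa [← spectrum.one_add_mul_mem_one_add_smul_iff (inv_ne_zero hc'),
        inv_mul_cancel_left₀ hc', add_sub_cancel, ← hmap]
    simpa only [inv_mul_cancel_left₀ hc', add_sub_cancel] using hdisc _ hz'
  refine ⟨c⁻¹ • Q, fun i j => mul_nonneg (inv_nonneg.2 hc.le) (hQ i j), ?_⟩
  calc -M * (c⁻¹ • Q) = (1 - (1 + c⁻¹ • M)) * Q := by
        rw [sub_add_cancel_left, neg_mul, neg_mul, smul_mul_assoc, mul_smul_comm]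
    _ = 1 := hPQ

end IsMetzler

theorem unit_metzler_cycle_not_hurwitz_general {n : ℕ} (M : Matrix (Fin n) (Fin n) ℝ)
    (hM : IsMetzler M) (hentries : ∀ i j, M i j = -1 ∨ M i j = 0 ∨ M i j = 1)
    (hcycle : ∃ i : Fin n, Relation.TransGen (EdgeRel M) i i) :
    (∃ μ ∈ spectrum ℂ (M.map (Complex.ofReal)), 0 ≤ μ.re) ∧ ¬ IsHurwitz M := by
  have hA : ∀ i j, 0 ≤ (M + 1) i j := by
    intro i j
    rcases eq_or_ne i j with rfl | hij
    · rcases hentries i i with h | h | h <;> norm_num [h]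
    · simpa [one_apply_ne hij] using hM i j hij
  have hedge : ∀ a b, EdgeRel M a b → 1 ≤ (M + 1) b a := by
    rintro a b ⟨hba, hM0⟩
    have h1 : M b a = 1 := by
      rcases hentries b a with h | h | h
      · linarith [hM b a hba]
      · exact absurd h hM0
      · exact h
    simp [one_apply_ne hba, h1]
  obtain ⟨i, hi⟩ := hcycle
  obtain ⟨k, hk, hki⟩ := exists_one_le_pow_apply_of_transGen hA hedge hi
  have hspec : ∃ μ ∈ spectrum ℂ (M.map Complex.ofReal), 0 ≤ μ.re := by
    by_contra! hre
    obtain ⟨N, hN, hMN⟩ := hM.exists_nonneg_neg_mul_eq_one hre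
    have hAN : (1 - (M + 1)) * N = 1 := by rwa [add_comm M, sub_add_cancel_left]
    exact (pow_apply_self_lt_one hA hN hAN hk i).not_ge hki
  obtain ⟨μ, hμ, hμre⟩ := hspec
  exact ⟨⟨μ, hμ, hμre⟩, fun hH => (hH μ hμ).not_ge hμre⟩

/-- A Metzler matrix with entries in `{-1,0,1}`, negative diagonal, whose
directed graph contains a cycle, has nonnegative spectral abscissa and hence
is not Hurwitz stable. -/
theorem unit_metzler_cycle_not_hurwitz {n : ℕ} (M : Matrix (Fin n) (Fin n) ℝ)
    (hM : IsMetzler M) (hentries : ∀ i j, M i j = -1 ∨ M i j = 0 ∨ M i j = 1)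
    (hdiag : ∀ i, M i i < 0)
    (hcycle : ∃ i : Fin n, Relation.TransGen (EdgeRel M) i i) :
    (∃ μ ∈ spectrum ℂ (M.map (Complex.ofReal)), 0 ≤ μ.re) ∧ ¬ IsHurwitz M :=
  unit_metzler_cycle_not_hurwitz_general M hM hentries hcycle
end

section
/- Let U ∈ {0,1}^{n×n} be a nonnegative sign pattern. Every matrix in the qualitative class of U has spectral radius less than 1 if and only if all diagonal entries of U are zero and the directed graph with edge (j,i) whenever U_{ij} = 1 is acyclic. -/
/-!
If the pattern has a loop or a cycle through `i`, the 0/1 matrix `U` itself lies in its class and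
`(U ^ k) i i ≥ 1` for some `k > 0`, hence `(U ^ (k * m)) i i ≥ 1` for all `m`; but by Gelfand's
formula the powers of a matrix with spectrum in the open unit disc tend to zero. Conversely, if
the graph is acyclic, every matrix of the class is nilpotent: a nonzero entry `(M ^ m) i j` forces
`j` to have at least `m` descendants. So its spectrum is `{0}`.
-/

open Matrix

def InQualClassNN {n : ℕ} (U M : Matrix (Fin n) (Fin n) ℝ) : Prop :=
  ∀ i j, (U i j = 1 → 0 < M i j) ∧ (U i j = 0 → M i j = 0)

open Filter Topology Relation

theorem spectrum.eq_zero_of_isNilpotent {𝕜 A : Type*} [Field 𝕜] [Ring A] [Algebra 𝕜 A] {a : A}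
    (ha : IsNilpotent a) {μ : 𝕜} (hμ : μ ∈ spectrum 𝕜 a) : μ = 0 := by
  cases subsingleton_or_nontrivial A
  · simp [spectrum.of_subsingleton] at hμ
  obtain ⟨k, hk⟩ := ha
  have hμk := spectrum.pow_mem_pow a k hμ
  rw [hk, spectrum.zero_eq, Set.mem_singleton_iff] at hμk
  exact (pow_eq_zero_iff'.mp hμk).1

theorem tendsto_pow_atTop_nhds_zero_of_spectralRadius_lt_one {A : Type*} [NormedRing A]
    [NormedAlgebra ℂ A] [CompleteSpace A] {a : A} (ha : spectralRadius ℂ a < 1) :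
    Tendsto (a ^ ·) atTop (𝓝 0) := by
  obtain ⟨r, hρr, hr1⟩ := ENNReal.lt_iff_exists_nnreal_btwn.mp ha
  have hgelfand := spectrum.pow_nnnorm_pow_one_div_tendsto_nhds_spectralRadius a
  have hbound : ∀ᶠ n : ℕ in atTop, ‖a ^ n‖ ≤ (r : ℝ) ^ n := by
    filter_upwards [hgelfand.eventually_lt_const hρr, eventually_gt_atTop 0] with n hn hn0
    rw [one_div, ENNReal.rpow_inv_lt_iff (by positivity), ENNReal.rpow_natCast] at hn
    exact_mod_cast hn.le
  exact squeeze_zero_norm' hbound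
    (tendsto_pow_atTop_nhds_zero_of_lt_one r.2 (by exact_mod_cast hr1))

namespace Matrix

variable {ι R : Type*} [Fintype ι] [DecidableEq ι]

theorem tendsto_pow_atTop_nhds_zero_of_forall_norm_lt_one {A : Matrix ι ι ℂ}
    (hA : ∀ μ ∈ spectrum ℂ A, ‖μ‖ < 1) : Tendsto (A ^ ·) atTop (𝓝 0) := by
  let := Matrix.linftyOpNormedRing (n := ι) (α := ℂ)
  let := Matrix.linftyOpNormedAlgebra (n := ι) (R := ℂ) (α := ℂ)
  have : CompleteSpace (Matrix ι ι ℂ) := inferInstanceAs (CompleteSpace (ι → ι → ℂ))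
  nontriviality (Matrix ι ι ℂ)
  refine tendsto_pow_atTop_nhds_zero_of_spectralRadius_lt_one ?_
  exact_mod_cast spectrum.spectralRadius_lt_of_forall_lt (r := 1) A fun z hz => by
    exact_mod_cast hA z hz

section Acyclic

variable [Semiring R] {r : ι → ι → Prop} {M : Matrix ι ι R}

theorem le_ncard_transGen_of_pow_apply_ne_zero (hM : ∀ i j, M i j ≠ 0 → r j i)
    (hr : ∀ i, ¬ TransGen r i i) {m : ℕ} {i j : ι} (h : (M ^ m) i j ≠ 0) :
    m ≤ {x | TransGen r j x}.ncard := by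
  induction m generalizing j with
  | zero => exact Nat.zero_le _
  | succ m ih =>
    rw [pow_succ, mul_apply] at h
    obtain ⟨l, -, hl⟩ := Finset.exists_ne_zero_of_sum_ne_zero h
    have hjl : r j l := hM l j (right_ne_zero_of_mul hl)
    have hsub : {x | TransGen r l x} ⊂ {x | TransGen r j x} :=
      (Set.ssubset_iff_of_subset fun x hx => TransGen.head hjl hx).mpr
        ⟨l, TransGen.single hjl, hr l⟩
    exact (ih (left_ne_zero_of_mul hl)).trans_lt (Set.ncard_lt_ncard hsub)

theorem pow_card_eq_zero_of_acyclic (hM : ∀ i j, M i j ≠ 0 → r j i)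
    (hr : ∀ i, ¬ TransGen r i i) : M ^ Fintype.card ι = 0 := by
  ext i j
  by_contra h
  have hj : {x | TransGen r j x} ≠ Set.univ := Set.ne_univ_iff_exists_notMem _ |>.mpr ⟨j, hr j⟩
  have := (le_ncard_transGen_of_pow_apply_ne_zero hM hr h).trans_lt (Set.ncard_lt_card hj)
  simp at this

end Acyclic

section Nonneg

variable [Semiring R] [PartialOrder R] [IsOrderedRing R] {M : Matrix ι ι R}

theorem pow_apply_mul_pow_apply_le (hM : ∀ i j, 0 ≤ M i j) (a b : ℕ) (i l j : ι) :
    (M ^ a) i l * (M ^ b) l j ≤ (M ^ (a + b)) i j := by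
  rw [pow_add, mul_apply]
  exact Finset.single_le_sum (f := fun x => (M ^ a) i x * (M ^ b) x j)
    (fun x _ => mul_nonneg (pow_apply_nonneg hM a i x) (pow_apply_nonneg hM b x j))
    (Finset.mem_univ l)

theorem exists_one_le_pow_apply_of_transGen_s10 (hM : ∀ i j, 0 ≤ M i j) {i j : ι}
    (h : TransGen (fun j i => 1 ≤ M i j) j i) : ∃ k, 0 < k ∧ 1 ≤ (M ^ k) i j := by
  induction h with
  | single h => exact ⟨1, one_pos, by rwa [pow_one]⟩
  | @tail l i _ hli ih =>
    obtain ⟨k, hk, hkl⟩ := ih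
    refine ⟨1 + k, by omega, ?_⟩
    calc (1 : R) ≤ (M ^ 1) i l * (M ^ k) l j :=
          one_le_mul_of_one_le_of_one_le (by rwa [pow_one]) hkl
      _ ≤ _ := pow_apply_mul_pow_apply_le hM 1 k i l j

theorem one_le_pow_mul_apply (hM : ∀ i j, 0 ≤ M i j) {k : ℕ} {i : ι}
    (h : 1 ≤ (M ^ k) i i) (m : ℕ) : 1 ≤ (M ^ (k * m)) i i := by
  induction m with
  | zero => simp
  | succ m ih =>
    calc (1 : R) ≤ (M ^ (k * m)) i i * (M ^ k) i i := one_le_mul_of_one_le_of_one_le ih h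
      _ ≤ _ := pow_apply_mul_pow_apply_le hM _ k i i i

end Nonneg

theorem exists_one_le_norm_mem_spectrum_of_one_le_pow_apply {U : Matrix ι ι ℝ}
    (hU : ∀ i j, 0 ≤ U i j) {k : ℕ} (hk : 0 < k) {i : ι} (h : 1 ≤ (U ^ k) i i) :
    ∃ μ ∈ spectrum ℂ (U.map Complex.ofReal), 1 ≤ ‖μ‖ := by
  by_contra! hspec
  have hlim : Tendsto (fun m => ((U.map Complex.ofReal) ^ (k * m)) i i) atTop (𝓝 0) :=
    tendsto_pi_nhds.1 (tendsto_pi_nhds.1 ((tendsto_pow_atTop_nhds_zero_of_forall_norm_lt_one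
      hspec).comp (tendsto_id.const_mul_atTop' hk)) i) i
  have hge : ∀ m, 1 ≤ ‖((U.map Complex.ofReal) ^ (k * m)) i i‖ := fun m => by
    have hpow : (U.map Complex.ofReal) ^ (k * m) = (U ^ (k * m)).map Complex.ofReal :=
      (map_pow Complex.ofRealHom.mapMatrix U (k * m)).symm
    rw [hpow, map_apply, Complex.norm_real, Real.norm_of_nonneg (pow_apply_nonneg hU _ i i)]
    exact one_le_pow_mul_apply hU h m
  exact absurd (ge_of_tendsto' hlim.norm hge) (by simp)

end Matrix

/-- For a nonnegative sign pattern `U ∈ {0,1}^{n×n}`, every matrix in the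
qualitative class has spectral radius `< 1` iff all diagonal entries of `U`
are zero and the directed graph of `U` is acyclic. -/
theorem nn_sign_schur_iff_acyclic {n : ℕ} (U : Matrix (Fin n) (Fin n) ℝ)
    (hentries : ∀ i j, U i j = 0 ∨ U i j = 1) :
    (∀ M, InQualClassNN U M → ∀ μ ∈ spectrum ℂ (M.map (Complex.ofReal)), ‖μ‖ < 1) ↔
    ((∀ i, U i i = 0) ∧ ∀ i : Fin n, ¬ Relation.TransGen (EdgeRel U) i i) := by
  have hone_le : ∀ {i j}, U i j ≠ 0 → 1 ≤ U i j := fun h => ((hentries _ _).resolve_left h).ge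
  constructor
  · intro hschur
    have hU : ∀ i j, 0 ≤ U i j := fun i j => by rcases hentries i j with h | h <;> simp [h]
    have hself : InQualClassNN U U := fun i j => ⟨fun h => h ▸ one_pos, id⟩
    have hacyc : ∀ i, ¬ TransGen (fun j i => 1 ≤ U i j) i i := fun i hi => by
      obtain ⟨k, hk, hkii⟩ := exists_one_le_pow_apply_of_transGen_s10 hU hi
      obtain ⟨μ, hμ, h1μ⟩ := exists_one_le_norm_mem_spectrum_of_one_le_pow_apply hU hk hkii
      exact (hschur U hself μ hμ).not_ge h1μ
    refine ⟨fun i => ?_, fun i hi => hacyc i (TransGen.mono (fun _ _ e => hone_le e.2) _ _ hi)⟩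
    by_contra h
    exact hacyc i (.single (hone_le h))
  · rintro ⟨hdiag, hacyc⟩ M hM μ hμ
    have hedge : ∀ i j, M.map Complex.ofReal i j ≠ 0 → EdgeRel U j i := fun i j h => by
      have hMij : M i j ≠ 0 := by simpa using h
      exact ⟨fun hij => hMij (hij ▸ (hM i i).2 (hdiag i)), fun hU => hMij ((hM i j).2 hU)⟩
    rw [spectrum.eq_zero_of_isNilpotent ⟨_, pow_card_eq_zero_of_acyclic hedge hacyc⟩ hμ, norm_zero]
    exact one_pos
end

section
/- Let A₁, …, A_N be n×n Metzler matrices, all with negative diagonal entries. If the sum A₁ + ⋯ + A_N is such that its unit sign matrix sgn(ΣA_i) is Hurwitz stable, then for every nonzero β ∈ {0,1}^N, the matrix sgn(Σᵢ βᵢ Aᵢ) is Hurwitz stable. (Key monotonicity step: sgn(Σᵢ βᵢ Aᵢ) ≤ sgn(Σᵢ Aᵢ) entrywise implies the spectral abscissa of the former is at most that of the latter.) -/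
open Matrix

/-- Entrywise sign (unit sign-matrix) of a real matrix. -/
noncomputable def signMatrix {n : ℕ} (M : Matrix (Fin n) (Fin n) ℝ) : Matrix (Fin n) (Fin n) ℝ :=
  fun i j => Real.sign (M i j)

/-!
Off the diagonal `sgn (∑ βᵢ Aᵢ) ≤ sgn (∑ Aᵢ)` because `0 ≤ βᵢ ≤ 1` and the `Aᵢ` are Metzler, and on
the diagonal both sides equal `-1`. A Metzler matrix `X` dominated entrywise by a Hurwitz matrix `Y`
is Hurwitz: for large `c` both `c + X` and `c + Y` are nonnegative, the spectral radius is monotone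
on nonnegative matrices (Gelfand's formula for the `∞`-operator norm), and the spectrum of `c + Y`
lies in the open disc of radius `c`. Hence every eigenvalue `μ` of `X` satisfies
`‖μ + c‖ ≤ ρ (c + X) ≤ ρ (c + Y) < c`, so `Re μ < 0`.
-/

open Filter
open scoped NNReal ENNReal

attribute [local instance] Matrix.linftyOpNormedRing Matrix.linftyOpNormedAlgebra

theorem Complex.norm_ofReal_add_lt {μ : ℂ} {c : ℝ} (hμ : μ.re < 0)
    (hc : ‖μ‖ ^ 2 / (-2 * μ.re) < c) : ‖c + μ‖ < c := by
  have hc0 : 0 < c := (div_nonneg (sq_nonneg _) (by linarith)).trans_lt hc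
  have hμc : ‖μ‖ ^ 2 < c * (-2 * μ.re) := (div_lt_iff₀ (by linarith)).1 hc
  have hsq : ‖c + μ‖ ^ 2 = c ^ 2 + 2 * c * μ.re + ‖μ‖ ^ 2 := by
    simp only [Complex.sq_norm, Complex.normSq_apply, Complex.add_re, Complex.add_im,
      Complex.ofReal_re, Complex.ofReal_im]
    ring
  exact lt_of_pow_lt_pow_left₀ 2 hc0.le (by nlinarith)

theorem spectrum.eventually_spectralRadius_algebraMap_add_lt {A : Type*} [NormedRing A]
    [NormedAlgebra ℂ A] [CompleteSpace A] {a : A} (ha : ∀ μ ∈ spectrum ℂ a, μ.re < 0) :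
    ∀ᶠ c : ℝ≥0 in atTop, spectralRadius ℂ (algebraMap ℂ A (c : ℝ) + a) < c := by
  -- `‖c + μ‖ < c` holds once `c > ‖μ‖² / (-2 Re μ)`; compactness makes this bound uniform.
  obtain ⟨C, hC⟩ := (spectrum.isCompact a).bddAbove_image
    (f := fun μ : ℂ => ‖μ‖ ^ 2 / (-2 * μ.re)) <| by
      refine ContinuousOn.div (by fun_prop) (by fun_prop) fun μ hμ => ?_
      linarith [ha μ hμ]
  filter_upwards [eventually_gt_atTop C.toNNReal] with c hc
  have hCc : C < c := (Real.le_coe_toNNReal C).trans_lt hc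
  rcases (spectrum ℂ (algebraMap ℂ A (c : ℝ) + a)).eq_empty_or_nonempty with h | h
  · simp only [spectralRadius, h]
    simpa using pos_of_gt hc
  refine spectralRadius_lt_of_forall_lt_of_nonempty h fun ν hν => ?_
  rw [← spectrum.singleton_add_eq] at hν
  obtain ⟨_, rfl, μ, hμ, rfl⟩ := hν
  rw [← NNReal.coe_lt_coe, coe_nnnorm]
  exact Complex.norm_ofReal_add_lt (ha μ hμ) ((hC ⟨μ, hμ, rfl⟩).trans_lt hCc)

namespace Matrix

variable {ι : Type*} [Fintype ι] [DecidableEq ι] {B C : Matrix ι ι ℝ}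

theorem pow_apply_le_pow_apply (hB : ∀ i j, 0 ≤ B i j) (hBC : ∀ i j, B i j ≤ C i j) (k : ℕ)
    (i j : ι) : (B ^ k) i j ≤ (C ^ k) i j := by
  induction k generalizing j with
  | zero => rfl
  | succ k ih =>
    rw [pow_succ, pow_succ, mul_apply, mul_apply]
    exact Finset.sum_le_sum fun l _ =>
      mul_le_mul (ih l) (hBC l j) (hB l j) ((pow_apply_nonneg hB k i l).trans (ih l))

theorem linfty_opNNNorm_map_ofReal_le (hB : ∀ i j, 0 ≤ B i j) (hBC : ∀ i j, B i j ≤ C i j) :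
    ‖B.map Complex.ofReal‖₊ ≤ ‖C.map Complex.ofReal‖₊ := by
  rw [linfty_opNNNorm_def, linfty_opNNNorm_def]
  refine Finset.sup_mono_fun fun i _ => Finset.sum_le_sum fun j _ => ?_
  rw [← NNReal.coe_le_coe, map_apply, map_apply, coe_nnnorm, coe_nnnorm, Complex.norm_real,
    Complex.norm_real, Real.norm_of_nonneg (hB i j), Real.norm_of_nonneg ((hB i j).trans (hBC i j))]
  exact hBC i j

theorem spectralRadius_map_ofReal_mono (hB : ∀ i j, 0 ≤ B i j) (hBC : ∀ i j, B i j ≤ C i j) :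
    spectralRadius ℂ (B.map Complex.ofReal) ≤ spectralRadius ℂ (C.map Complex.ofReal) := by
  have : CompleteSpace (Matrix ι ι ℂ) := FiniteDimensional.complete ℂ _
  refine le_of_tendsto_of_tendsto'
    (spectrum.pow_nnnorm_pow_one_div_tendsto_nhds_spectralRadius (B.map Complex.ofReal))
    (spectrum.pow_nnnorm_pow_one_div_tendsto_nhds_spectralRadius (C.map Complex.ofReal))
    fun k => ?_
  have hpow (M : Matrix ι ι ℝ) : M.map Complex.ofReal ^ k = (M ^ k).map Complex.ofReal :=
    (map_pow Complex.ofRealHom.mapMatrix M k).symm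
  rw [hpow, hpow]
  gcongr
  exact linfty_opNNNorm_map_ofReal_le (pow_apply_nonneg hB k) (pow_apply_le_pow_apply hB hBC k)

end Matrix

theorem IsHurwitz.of_isMetzler_of_le {n : ℕ} {X Y : Matrix (Fin n) (Fin n) ℝ} (hY : IsHurwitz Y)
    (hX : IsMetzler X) (hXY : ∀ i j, X i j ≤ Y i j) : IsHurwitz X := by
  have : CompleteSpace (Matrix (Fin n) (Fin n) ℂ) := FiniteDimensional.complete ℂ _
  intro μ hμ
  obtain ⟨c, hcX, hcY⟩ := ((eventually_all.2 fun i => eventually_ge_atTop (-X i i).toNNReal).and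
    (spectrum.eventually_spectralRadius_algebraMap_add_lt hY)).exists
  have hshift (M : Matrix (Fin n) (Fin n) ℝ) : (algebraMap ℝ _ (c : ℝ) + M).map Complex.ofReal =
      algebraMap ℂ (Matrix (Fin n) (Fin n) ℂ) (c : ℝ) + M.map Complex.ofReal := by
    ext i j
    by_cases h : i = j <;> simp [algebraMap_matrix_apply, h]
  have hnonneg : ∀ i j, 0 ≤ (algebraMap ℝ _ (c : ℝ) + X) i j := by
    intro i j
    rcases eq_or_ne i j with rfl | h
    · simpa [algebraMap_matrix_apply, neg_le_iff_add_nonneg] using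
        Real.toNNReal_le_iff_le_coe.1 (hcX i)
    · simpa [algebraMap_matrix_apply, h] using hX i j h
  have hle : ∀ i j, (algebraMap ℝ _ (c : ℝ) + X) i j ≤ (algebraMap ℝ _ (c : ℝ) + Y) i j :=
    fun i j => by simp only [Matrix.add_apply]; gcongr; exact hXY i j
  have hmem : μ + (c : ℝ) ∈ spectrum ℂ (algebraMap ℂ _ (c : ℝ) + X.map Complex.ofReal) :=
    spectrum.add_mem_add_iff.2 hμ
  have hnorm : ‖μ + (c : ℝ)‖₊ < c := by
    refine ENNReal.coe_lt_coe.1 (lt_of_le_of_lt ?_ hcY)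
    calc (‖μ + (c : ℝ)‖₊ : ℝ≥0∞)
        ≤ spectralRadius ℂ (algebraMap ℂ _ (c : ℝ) + X.map Complex.ofReal) :=
          le_iSup₂ (α := ℝ≥0∞) _ hmem
      _ ≤ spectralRadius ℂ (algebraMap ℂ _ (c : ℝ) + Y.map Complex.ofReal) := by
          rw [← hshift, ← hshift]
          exact Matrix.spectralRadius_map_ofReal_mono hnonneg hle
  have := (Complex.re_le_norm _).trans_lt (NNReal.coe_lt_coe.2 hnorm)
  simp only [Complex.add_re, Complex.ofReal_re] at this
  linarith

theorem Real.sign_monotone : Monotone Real.sign := by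
  intro x y hxy
  rcases lt_trichotomy x 0 with hx | rfl | hx <;> rcases lt_trichotomy y 0 with hy | rfl | hy <;>
    simp [Real.sign_of_neg, Real.sign_of_pos, *] <;> linarith

theorem IsMetzler.signMatrix {n : ℕ} {M : Matrix (Fin n) (Fin n) ℝ} (hM : IsMetzler M) :
    IsMetzler (signMatrix M) := fun i j hij =>
  show 0 ≤ Real.sign (M i j) from Real.sign_zero ▸ Real.sign_monotone (hM i j hij)

theorem IsMetzler.sum_smul {n N : ℕ} {A : Fin N → Matrix (Fin n) (Fin n) ℝ} {β : Fin N → ℝ}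
    (hA : ∀ k, IsMetzler (A k)) (hβ : ∀ k, 0 ≤ β k) : IsMetzler (∑ k, β k • A k) :=
  fun i j hij => by
    simpa [Matrix.sum_apply] using Finset.sum_nonneg fun k _ => mul_nonneg (hβ k) (hA k i j hij)

theorem signMatrix_le_signMatrix {n : ℕ} {X Y : Matrix (Fin n) (Fin n) ℝ}
    (hXY : ∀ i j, i ≠ j → X i j ≤ Y i j) (hX : ∀ i, X i i < 0) (hY : ∀ i, Y i i < 0) (i j : Fin n) :
    signMatrix X i j ≤ signMatrix Y i j := by
  rcases eq_or_ne i j with rfl | hij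
  · simp only [signMatrix, Real.sign_of_neg (hX i), Real.sign_of_neg (hY i), le_refl]
  · exact Real.sign_monotone (hXY i j hij)

/-- If `A₁,…,A_N` are Metzler with negative diagonal and the unit sign-matrix of
their sum is Hurwitz stable, then for every nonzero `β ∈ {0,1}^N` the unit
sign-matrix of `∑ βᵢ Aᵢ` is Hurwitz stable. -/
theorem sign_stable_convex_hull {n N : ℕ} (A : Fin N → Matrix (Fin n) (Fin n) ℝ)
    (hMetz : ∀ k, IsMetzler (A k)) (hdiag : ∀ k i, A k i i < 0)
    (hsum : IsHurwitz (signMatrix (∑ k, A k))) :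
    ∀ β : Fin N → ℝ, (∀ k, β k = 0 ∨ β k = 1) → β ≠ 0 →
      IsHurwitz (signMatrix (∑ k, β k • A k)) := by
  intro β hβ hβ0
  have hβ_nonneg (k : Fin N) : 0 ≤ β k := by rcases hβ k with h | h <;> simp [h]
  have hβ_le_one (k : Fin N) : β k ≤ 1 := by rcases hβ k with h | h <;> simp [h]
  obtain ⟨k₀, hk₀⟩ : ∃ k, β k = 1 :=
    (Function.ne_iff.1 hβ0).imp fun k hk => (hβ k).resolve_left hk
  refine hsum.of_isMetzler_of_le (IsMetzler.sum_smul hMetz hβ_nonneg).signMatrix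
    (signMatrix_le_signMatrix (fun i j hij => ?_) (fun i => ?_) (fun i => ?_))
  · simpa [Matrix.sum_apply] using Finset.sum_le_sum fun k _ =>
      mul_le_of_le_one_left (hMetz k i j hij) (hβ_le_one k)
  · simpa [Matrix.sum_apply] using Finset.sum_neg' (s := Finset.univ)
      (fun k _ => mul_nonpos_of_nonneg_of_nonpos (hβ_nonneg k) (hdiag k i).le)
      ⟨k₀, Finset.mem_univ _, by simpa [hk₀] using hdiag k₀ i⟩
  · simpa [Matrix.sum_apply] using Finset.sum_neg (fun k _ => hdiag k i) ⟨k₀, Finset.mem_univ _⟩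
end

section
/- Let A₁, …, A_N be n×n real upper-triangular Hurwitz stable matrices. Then there exists a single positive vector v ∈ ℝⁿ_{>0} such that vᵀAᵢ < 0 (componentwise) for all i = 1, …, N. -/
/-!
The diagonal entries of a triangular matrix are eigenvalues, so Hurwitz stability makes every
diagonal entry negative. For `v = (1, t, t², …, t^{n-1})`, the `j`-th entry of `vᵀA` is
`A j j * t^j` plus terms of lower order in `t`, hence negative once `t` is large; since there are
finitely many matrices and columns, one large `t` serves them all.
-/

open Matrix

open Filter Asymptotics

theorem Matrix.IsUpperTriangular.diag_mem_spectrum {n R : Type*} [Fintype n] [DecidableEq n]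
    [LinearOrder n] [CommRing R] [Nontrivial R] {M : Matrix n n R} (hM : M.IsUpperTriangular)
    (j : n) : M j j ∈ spectrum R M := by
  refine mem_spectrum_of_isRoot_charpoly ?_
  rw [charpoly_of_isUpperTriangular M hM, Polynomial.IsRoot, Polynomial.eval_prod]
  exact Finset.prod_eq_zero (Finset.mem_univ j) (by simp)

theorem IsHurwitz.diag_neg {n : ℕ} {A : Matrix (Fin n) (Fin n) ℝ} (hA : IsHurwitz A)
    (htri : A.IsUpperTriangular) (j : Fin n) : A j j < 0 := by
  simpa using hA _ (IsUpperTriangular.diag_mem_spectrum (htri.map Complex.ofRealHom) j)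

theorem Matrix.IsUpperTriangular.vecMul_apply_eq_sum_Iio_add {ι R : Type*} [Fintype ι]
    [LinearOrder ι] [LocallyFiniteOrderBot ι] [NonUnitalNonAssocSemiring R] {A : Matrix ι ι R}
    (htri : A.IsUpperTriangular) (v : ι → R) (j : ι) :
    (v ᵥ* A) j = ∑ i ∈ Finset.Iio j, v i * A i j + v j * A j j := by
  rw [Finset.sum_Iio_add_eq_sum_Iic, vecMul, dotProduct]
  refine (Finset.sum_subset (Finset.subset_univ _) fun i _ hi => ?_).symm
  rw [htri (not_le.1 (Finset.mem_Iic.not.1 hi)), mul_zero]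

theorem Matrix.IsUpperTriangular.eventually_vecMul_pow_neg {n : ℕ} {A : Matrix (Fin n) (Fin n) ℝ}
    (htri : A.IsUpperTriangular) {j : Fin n} (hj : A j j < 0) :
    ∀ᶠ t in atTop, ((fun i : Fin n => t ^ (i : ℕ)) ᵥ* A) j < 0 := by
  set S : ℝ → ℝ := fun t => ∑ i ∈ Finset.Iio j, t ^ (i : ℕ) * A i j
  have hS : S =o[atTop] fun t => t ^ (j : ℕ) := by
    refine IsLittleO.fun_sum fun i hi => ?_
    simpa only [mul_comm] using
      (isLittleO_pow_pow_atTop_of_lt (Fin.lt_def.1 (Finset.mem_Iio.1 hi))).const_mul_left (A i j)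
  filter_upwards [hS.bound (c := -A j j / 2) (by linarith), eventually_gt_atTop 0] with t hSt ht
  have htj : 0 < t ^ (j : ℕ) := pow_pos ht _
  rw [Real.norm_of_nonneg htj.le, Real.norm_eq_abs] at hSt
  calc ((fun i : Fin n => t ^ (i : ℕ)) ᵥ* A) j = S t + t ^ (j : ℕ) * A j j :=
        htri.vecMul_apply_eq_sum_Iio_add _ j
    _ ≤ -A j j / 2 * t ^ (j : ℕ) + t ^ (j : ℕ) * A j j := by grw [← hSt, le_abs_self (S t)]
    _ = A j j / 2 * t ^ (j : ℕ) := by ring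
    _ < 0 := mul_neg_of_neg_of_pos (by linarith) htj

/-- For finitely many upper-triangular Hurwitz stable real matrices, there is a
single positive vector `v` with `vᵀAᵢ` componentwise negative for all `i`. -/
theorem common_linear_lyapunov {n N : ℕ} (A : Fin N → Matrix (Fin n) (Fin n) ℝ)
    (htri : ∀ k, ∀ i j : Fin n, j < i → A k i j = 0)
    (hH : ∀ k, IsHurwitz (A k)) :
    ∃ v : Fin n → ℝ, (∀ i, 0 < v i) ∧ ∀ k, ∀ j, (v ᵥ* A k) j < 0 := by
  have hupper : ∀ k, (A k).IsUpperTriangular := fun k i j => htri k i j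
  have hneg : ∀ k j, ∀ᶠ t in atTop, ((fun i : Fin n => t ^ (i : ℕ)) ᵥ* A k) j < 0 :=
    fun k j => (hupper k).eventually_vecMul_pow_neg ((hH k).diag_neg (hupper k) j)
  obtain ⟨t, ht, htneg⟩ :=
    ((eventually_gt_atTop 0).and (eventually_all.2 fun k => eventually_all.2 (hneg k))).exists
  exact ⟨fun i => t ^ (i : ℕ), fun i => pow_pos ht _, htneg⟩
end

section
/- Let A be an n×n real upper-triangular Metzler matrix with negative diagonal entries (hence invertible). Then all entries of A⁻¹ are nonpositive, the diagonal entries of A⁻¹ are negative, and for i ≠ j the entry (A⁻¹)_{ij} is nonzero (hence negative) if and only if there is a directed path from node j to node i in the directed graph of A (which has an edge from j to i whenever i ≠ j and A_{ij} ≠ 0). -/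
open Matrix

/-!
Write `B = A⁻¹` and read off row `i` of `A * B = 1`:
`A i i * B i j = δᵢⱼ - ∑_{k ≠ i} A i k * B k j`.
Only `k > i` contribute, since `A` is upper triangular, so downward induction on `i` applies.
By induction `B k j ≤ 0`, so every term of the sum is `≤ 0` and the right-hand side is a sum of
two nonnegative quantities; dividing by `A i i < 0` gives `B i j ≤ 0`. Moreover `B i j ≠ 0` iff
`i = j` or some term is nonzero, i.e. `i = j` or there is an edge `k → i` with `B k j ≠ 0`, which
is exactly the recursive description of "`i` is reachable from `j`".
-/

open Finset Relation

theorem Matrix.diag_mul_eq_one_sub_sum_erase {ι R : Type*} [Fintype ι] [DecidableEq ι] [Ring R]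
    {A B : Matrix ι ι R} (h : A * B = 1) (i j : ι) :
    A i i * B i j = (1 : Matrix ι ι R) i j - ∑ k ∈ univ.erase i, A i k * B k j := by
  rw [← h, mul_apply, ← add_sum_erase _ _ (mem_univ i), add_sub_cancel_right]

theorem Matrix.one_apply_nonneg {ι R : Type*} [DecidableEq ι] [Zero R] [One R] [Preorder R]
    [ZeroLEOneClass R] (i j : ι) : 0 ≤ (1 : Matrix ι ι R) i j := by
  rw [one_apply]
  split_ifs
  exacts [zero_le_one, le_rfl]

theorem Matrix.one_apply_ne_zero_iff {ι R : Type*} [DecidableEq ι] [Zero R] [One R]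
    [NeZero (1 : R)] {i j : ι} : (1 : Matrix ι ι R) i j ≠ 0 ↔ i = j := by
  rw [one_apply]
  split_ifs with h <;> simp [h]

section UpperTriangularMetzler

variable {n : ℕ} {A B : Matrix (Fin n) (Fin n) ℝ}

theorem EdgeRel.lt_of_upperTriangular (htri : ∀ i j : Fin n, j < i → A i j = 0) {k i : Fin n}
    (h : EdgeRel A k i) : i < k :=
  h.1.lt_of_le (not_lt.mp fun hki => h.2 (htri i k hki))

theorem IsMetzler.mul_nonpos_of_upperTriangular (hM : IsMetzler A)
    (htri : ∀ i j : Fin n, j < i → A i j = 0) {i j : Fin n} (hB : ∀ k, i < k → B k j ≤ 0) :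
    ∀ k ∈ univ.erase i, A i k * B k j ≤ 0 := by
  intro k hk
  have hki : k ≠ i := ne_of_mem_erase hk
  by_cases hA : A i k = 0
  · rw [hA, zero_mul]
  · exact mul_nonpos_of_nonneg_of_nonpos (hM i k hki.symm)
      (hB k (EdgeRel.lt_of_upperTriangular htri ⟨hki.symm, hA⟩))

theorem IsMetzler.nonpos_of_mul_eq_one (hM : IsMetzler A)
    (htri : ∀ i j : Fin n, j < i → A i j = 0) (hdiag : ∀ i, A i i < 0) (h : A * B = 1)
    (i j : Fin n) : B i j ≤ 0 := by
  induction i using WellFoundedGT.induction with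
  | _ i ih =>
    have hsum := sum_nonpos (hM.mul_nonpos_of_upperTriangular htri (ih · ·))
    have hrow := diag_mul_eq_one_sub_sum_erase h i j
    exact nonpos_of_mul_nonneg_right (by linarith [one_apply_nonneg (R := ℝ) i j]) (hdiag i)

theorem IsMetzler.ne_zero_iff_reflTransGen_of_mul_eq_one (hM : IsMetzler A)
    (htri : ∀ i j : Fin n, j < i → A i j = 0) (hdiag : ∀ i, A i i < 0) (h : A * B = 1)
    (i j : Fin n) : B i j ≠ 0 ↔ ReflTransGen (EdgeRel A) j i := by
  have hB := hM.nonpos_of_mul_eq_one htri hdiag h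
  induction i using WellFoundedGT.induction with
  | _ i ih =>
    have hterm := hM.mul_nonpos_of_upperTriangular htri (i := i) fun k _ => hB k j
    have hsum := sum_nonpos hterm
    have hrow : B i j ≠ 0 ↔ (1 : Matrix (Fin n) (Fin n) ℝ) i j ≠ 0 ∨
        ∑ k ∈ univ.erase i, A i k * B k j ≠ 0 := by
      rw [← (mul_ne_zero_iff_left (hdiag i).ne), diag_mul_eq_one_sub_sum_erase h, sub_eq_add_neg,
        Ne, add_eq_zero_iff_of_nonneg (one_apply_nonneg i j) (neg_nonneg.mpr hsum), neg_eq_zero,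
        not_and_or]
    have hstep : ∑ k ∈ univ.erase i, A i k * B k j ≠ 0 ↔
        ∃ k, ReflTransGen (EdgeRel A) j k ∧ EdgeRel A k i := by
      rw [Ne, sum_eq_zero_iff_of_nonpos hterm]
      push Not
      refine exists_congr fun k => ⟨fun ⟨hk, hAB⟩ => ?_, fun ⟨hjk, hki⟩ => ?_⟩
      · have hki : EdgeRel A k i := ⟨(ne_of_mem_erase hk).symm, left_ne_zero_of_mul hAB⟩
        exact ⟨(ih k (hki.lt_of_upperTriangular htri)).mp (right_ne_zero_of_mul hAB), hki⟩
      · exact ⟨mem_erase.mpr ⟨hki.1.symm, mem_univ k⟩,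
          mul_ne_zero hki.2 ((ih k (hki.lt_of_upperTriangular htri)).mpr hjk)⟩
    rw [hrow, hstep, one_apply_ne_zero_iff, ReflTransGen.cases_tail_iff]

end UpperTriangularMetzler

/-- For an upper-triangular Metzler matrix with negative diagonal, the inverse
is entrywise nonpositive, has negative diagonal, and its off-diagonal entry
`(i,j)` is nonzero exactly when there is a directed path from `j` to `i` in the
directed graph of `A`. -/
theorem inv_of_triangular_metzler {n : ℕ} (A : Matrix (Fin n) (Fin n) ℝ)
    (hM : IsMetzler A) (htri : ∀ i j : Fin n, j < i → A i j = 0)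
    (hdiag : ∀ i, A i i < 0) :
    (∀ i j, A⁻¹ i j ≤ 0) ∧ (∀ i, A⁻¹ i i < 0) ∧
    (∀ i j, i ≠ j → (A⁻¹ i j ≠ 0 ↔ Relation.TransGen (EdgeRel A) j i)) := by
  have hdet : IsUnit A.det := by
    rw [det_of_isUpperTriangular fun i j h => htri i j h]
    exact (prod_ne_zero_iff.mpr fun i _ => (hdiag i).ne).isUnit
  have hinv := mul_nonsing_inv A hdet
  have hnonpos := hM.nonpos_of_mul_eq_one htri hdiag hinv
  have hsupp := hM.ne_zero_iff_reflTransGen_of_mul_eq_one htri hdiag hinv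
  refine ⟨hnonpos, fun i => (hnonpos i i).lt_of_ne ((hsupp i i).mpr ReflTransGen.refl), ?_⟩
  intro i j hij
  rw [hsupp, reflTransGen_iff_eq_or_transGen, or_iff_right hij]
end

section
/- (Schur-complement stability for Metzler block matrices.) Let M = [[M₁₁, M₁₂],[M₂₁, M₂₂]] be a Metzler matrix where M₁₁, M₂₂ are square Metzler blocks and M₁₂, M₂₁ are entrywise nonnegative. Then M is Hurwitz stable if and only if M₁₁ is Hurwitz stable and M₂₂ − M₂₁ M₁₁⁻¹ M₁₂ is Hurwitz stable. -/
/-!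
For a Metzler matrix `A`, Hurwitz stability is equivalent to the existence of `v > 0` with
`A v < 0`. Such a `v` gives stability by Gershgorin's theorem applied to `diag(v)⁻¹ A diag(v)`.
Conversely, `(t - A)⁻¹` is entrywise nonnegative for large `t` (a Neumann series, as `A + s` is
nonnegative for large `s`); if it is nonnegative at some `t > 0`, then so is
`(t - δ - A)⁻¹ = (1 - δ (t - A)⁻¹)⁻¹ (t - A)⁻¹` for small `δ > 0`, and by continuity of the
resolvent this reaches `t = 0`. Hence `A⁻¹ ≤ 0`, and `v = -A⁻¹ 1` is a witness.

With this criterion and `M₁₁⁻¹ ≤ 0`, the block statement is linear algebra: if `M (x, y) < 0` then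
`M₁₁ x < 0` and `S y < 0` for the Schur complement `S`; conversely, if `M₁₁ x < 0` and `S y < 0`,
then `M (ε x - M₁₁⁻¹ M₁₂ y, y) < 0` for small `ε > 0`.
-/

open Matrix

def IsMetzler' {n : Type*} [Fintype n] [DecidableEq n] (A : Matrix n n ℝ) : Prop :=
  ∀ i j, i ≠ j → 0 ≤ A i j

def IsHurwitz' {n : Type*} [Fintype n] [DecidableEq n] (A : Matrix n n ℝ) : Prop :=
  ∀ μ ∈ spectrum ℂ (A.map (Complex.ofReal)), μ.re < 0

open Filter Topology Set

section Positivity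

variable {l m o R : Type*} [Fintype m] [Semiring R] [PartialOrder R] [IsOrderedRing R]

theorem Matrix.mul_apply_nonneg {P : Matrix l m R} {Q : Matrix m o R} (hP : ∀ i j, 0 ≤ P i j)
    (hQ : ∀ i j, 0 ≤ Q i j) (i : l) (j : o) : 0 ≤ (P * Q) i j :=
  dotProduct_nonneg_of_nonneg (hP i) (fun k => hQ k j)

theorem Matrix.mulVec_nonneg_of_nonneg {P : Matrix l m R} (hP : ∀ i j, 0 ≤ P i j) {x : m → R}
    (hx : 0 ≤ x) : 0 ≤ P *ᵥ x :=
  fun i => dotProduct_nonneg_of_nonneg (hP i) hx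

end Positivity

section BlockVectors

variable {l m : Type*} [Fintype l] [Fintype m]

theorem exists_pos_fromBlocks_mulVec_neg_iff {A : Matrix l l ℝ} {B : Matrix l m ℝ}
    {C : Matrix m l ℝ} {D : Matrix m m ℝ} :
    (∃ v, (∀ i, 0 < v i) ∧ ∀ i, (fromBlocks A B C D *ᵥ v) i < 0) ↔
      ∃ x y, (∀ i, 0 < x i) ∧ (∀ i, 0 < y i) ∧ (∀ i, (A *ᵥ x + B *ᵥ y) i < 0) ∧
        ∀ i, (C *ᵥ x + D *ᵥ y) i < 0 := by
  constructor
  · rintro ⟨v, hv, hMv⟩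
    rw [← Sum.elim_comp_inl_inr v, fromBlocks_mulVec] at hMv
    exact ⟨v ∘ Sum.inl, v ∘ Sum.inr, fun i => hv _, fun i => hv _, fun i => hMv (.inl i),
      fun i => hMv (.inr i)⟩
  · rintro ⟨x, y, hx, hy, htop, hbot⟩
    refine ⟨Sum.elim x y, Sum.forall.2 ⟨hx, hy⟩, ?_⟩
    rw [fromBlocks_mulVec]
    exact Sum.forall.2 ⟨by simpa using htop, by simpa using hbot⟩

end BlockVectors

section Metzler

variable {n : Type*} [Fintype n] [DecidableEq n]

section Hurwitz

variable {A : Matrix n n ℝ}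

theorem IsHurwitz'.isUnit_smul_one_sub (hA : IsHurwitz' A) {t : ℝ} (ht : 0 ≤ t) :
    IsUnit (t • (1 : Matrix n n ℝ) - A) := by
  rw [isUnit_iff_isUnit_det, isUnit_iff_ne_zero]
  intro hdet
  refine (hA t (spectrum.mem_iff.2 fun hunit => ?_)).not_ge (by simpa using ht)
  have hmap : algebraMap ℂ (Matrix n n ℂ) t - A.map (↑) =
      Complex.ofRealHom.mapMatrix (t • 1 - A) := by
    ext i j
    by_cases h : i = j <;> simp [h, algebraMap_matrix_apply, one_apply]
  rw [hmap, isUnit_iff_isUnit_det, ← RingHom.map_det, hdet, map_zero] at hunit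
  exact not_isUnit_zero hunit

theorem IsHurwitz'.isUnit_det (hA : IsHurwitz' A) : IsUnit A.det := by
  have hneg := hA.isUnit_smul_one_sub le_rfl
  rw [zero_smul, zero_sub, IsUnit.neg_iff] at hneg
  exact (isUnit_iff_isUnit_det A).1 hneg

theorem IsHurwitz'.continuousOn_inv_smul_one_sub (hA : IsHurwitz' A) :
    ContinuousOn (fun t : ℝ => (t • (1 : Matrix n n ℝ) - A)⁻¹) (Ici 0) := by
  intro t ht
  have hdet : (t • (1 : Matrix n n ℝ) - A).det ≠ 0 :=
    ((isUnit_iff_isUnit_det _).1 (hA.isUnit_smul_one_sub ht)).ne_zero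
  have hinv : ContinuousAt Ring.inverse (t • (1 : Matrix n n ℝ) - A).det := by
    rw [Ring.inverse_eq_inv']
    exact continuousAt_inv₀ hdet
  exact (continuousAt_matrix_inv _ hinv).comp_continuousWithinAt
    (f := fun t : ℝ => t • (1 : Matrix n n ℝ) - A) (by fun_prop)

end Hurwitz

section Resolvent

open scoped Matrix.Norms.Operator

theorem Matrix.inv_one_sub_nonneg {X : Matrix n n ℝ} (hX : ∀ i j, 0 ≤ X i j) (hX1 : ‖X‖ < 1)
    (i j : n) : 0 ≤ (1 - X)⁻¹ i j := by
  have hsum := hasSum_geom_series_inverse X hX1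
  rw [← nonsing_inv_eq_ringInverse] at hsum
  exact hasSum_le (fun k => pow_apply_nonneg hX k i j) hasSum_zero
    (Pi.hasSum.1 (Pi.hasSum.1 hsum i) j)

theorem Matrix.inv_sub_smul_one_nonneg {X : Matrix n n ℝ} (hX : IsUnit X)
    (hXinv : ∀ i j, 0 ≤ X⁻¹ i j) {δ : ℝ} (hδ : 0 ≤ δ) (hδX : δ * ‖X⁻¹‖ < 1) (i j : n) :
    0 ≤ (X - δ • 1)⁻¹ i j := by
  have hfactor : X - δ • 1 = X * (1 - δ • X⁻¹) := by
    rw [mul_sub, mul_one, Matrix.mul_smul, mul_nonsing_inv _ ((isUnit_iff_isUnit_det X).1 hX)]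
  rw [hfactor, mul_inv_rev]
  refine mul_apply_nonneg (inv_one_sub_nonneg (fun i j => ?_) ?_) hXinv i j
  · simpa using mul_nonneg hδ (hXinv i j)
  · rwa [norm_smul, Real.norm_of_nonneg hδ]

theorem IsMetzler'.eventually_inv_smul_one_sub_nonneg {A : Matrix n n ℝ} (hA : IsMetzler' A) :
    ∀ᶠ t : ℝ in atTop, ∀ i j, 0 ≤ (t • (1 : Matrix n n ℝ) - A)⁻¹ i j := by
  set s := ∑ i, |A i i|
  set B := A + s • 1
  have hB : ∀ i j, 0 ≤ B i j := by
    intro i j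
    rcases eq_or_ne i j with rfl | hij
    · have : |A i i| ≤ s := Finset.single_le_sum (f := fun k => |A k k|)
        (fun _ _ => abs_nonneg _) (Finset.mem_univ i)
      simp only [B, Matrix.add_apply, Matrix.smul_apply, one_apply_eq, smul_eq_mul, mul_one]
      linarith [neg_abs_le (A i i)]
    · simpa [B, one_apply_ne hij] using hA i j hij
  filter_upwards [eventually_gt_atTop (‖B‖ - s)] with t ht i j
  have hu : 0 < t + s := by linarith [norm_nonneg B]
  have hfactor : t • 1 - A = (t + s) • (1 - (t + s)⁻¹ • B) := by
    rw [smul_sub, smul_smul, mul_inv_cancel₀ hu.ne', one_smul, add_smul]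
    simp only [B]
    abel
  have hB1 : ‖(t + s)⁻¹ • B‖ < 1 := by
    rw [norm_smul, Real.norm_of_nonneg (inv_nonneg.2 hu.le), inv_mul_lt_iff₀ hu, mul_one]
    linarith
  have := invertibleOfNonzero hu.ne'
  have hinv : (t • 1 - A)⁻¹ = (t + s)⁻¹ • (1 - (t + s)⁻¹ • B)⁻¹ := by
    rw [hfactor]
    simpa only [invOf_eq_inv] using
      inv_smul _ _ ((isUnit_iff_isUnit_det _).1 (isUnit_one_sub_of_norm_lt_one hB1))
  rw [hinv]
  have hnonneg := inv_one_sub_nonneg (fun i j => ?_) hB1 i j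
  · simpa using mul_nonneg (inv_nonneg.2 hu.le) hnonneg
  · simpa using mul_nonneg (inv_nonneg.2 hu.le) (hB i j)

theorem IsMetzler'.inv_smul_one_sub_nonneg {A : Matrix n n ℝ} (hM : IsMetzler' A)
    (hH : IsHurwitz' A) {t : ℝ} (ht : 0 ≤ t) : ∀ i j, 0 ≤ (t • (1 : Matrix n n ℝ) - A)⁻¹ i j := by
  set R := fun t : ℝ => (t • (1 : Matrix n n ℝ) - A)⁻¹
  set S := R ⁻¹' {X | ∀ i j, 0 ≤ X i j}
  obtain ⟨T, hT⟩ := eventually_atTop.1 hM.eventually_inv_smul_one_sub_nonneg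
  have hclosed : IsClosed (S ∩ Icc t (max t T)) := by
    rw [inter_comm]
    refine (hH.continuousOn_inv_smul_one_sub.mono fun x hx => ht.trans hx.1)
      |>.preimage_isClosed_of_isClosed isClosed_Icc ?_
    simp only [ofPred_forall]
    exact isClosed_iInter fun i => isClosed_iInter fun j =>
      isClosed_le continuous_const (continuous_id (X := Matrix n n ℝ) |>.matrix_elem i j)
  refine hclosed.mem_of_ge_of_forall_exists_lt (hT _ (le_max_right t T)) (le_max_left t T) ?_
  rintro x ⟨hxS, htx, -⟩
  have hsmall : ∀ᶠ δ in 𝓝 (0 : ℝ), δ * ‖R x‖ < 1 ∧ δ < x - t :=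
    (((continuous_id.mul continuous_const).tendsto' 0 0 (by simp)).eventually
      (gt_mem_nhds one_pos)).and (gt_mem_nhds (sub_pos.2 htx))
  obtain ⟨δ, hδ, hδR, hδx⟩ := hsmall.exists_gt
  refine ⟨x - δ, fun i j => ?_, by linarith, by linarith⟩
  have hshift : (x - δ) • (1 : Matrix n n ℝ) - A = (x • 1 - A) - δ • 1 := by
    rw [sub_smul]; abel
  simp only [R, hshift]
  exact inv_sub_smul_one_nonneg (hH.isUnit_smul_one_sub (ht.trans htx.le)) hxS
    hδ.le hδR i j

end Resolvent

namespace IsMetzler'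

variable {A : Matrix n n ℝ}

theorem inv_nonpos (hM : IsMetzler' A) (hH : IsHurwitz' A) (i j : n) : A⁻¹ i j ≤ 0 := by
  have hneg : (-A)⁻¹ = -A⁻¹ :=
    inv_eq_left_inv (by rw [neg_mul_neg, nonsing_inv_mul _ hH.isUnit_det])
  simpa [hneg] using hM.inv_smul_one_sub_nonneg hH le_rfl i j

/-- `v = -A⁻¹ 1` works: it is nonnegative, and a zero entry `vᵢ` would make
`(A v)ᵢ = ∑_{j ≠ i} Aᵢⱼ vⱼ` nonnegative, whereas `A v = -1`. -/
theorem exists_pos_mulVec_neg (hM : IsMetzler' A) (hH : IsHurwitz' A) :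
    ∃ v : n → ℝ, (∀ i, 0 < v i) ∧ ∀ i, (A *ᵥ v) i < 0 := by
  set v := -A⁻¹ *ᵥ fun _ => (1 : ℝ)
  have hv : 0 ≤ v := mulVec_nonneg_of_nonneg (fun i j => by simpa using hM.inv_nonpos hH i j)
    fun _ => zero_le_one
  have hAv : A *ᵥ v = fun _ => -1 := by
    rw [mulVec_mulVec, mul_neg, mul_nonsing_inv _ hH.isUnit_det, neg_mulVec, one_mulVec]
    rfl
  refine ⟨v, fun i => (hv i).lt_of_ne fun hvi => ?_, fun i => by simp [hAv]⟩
  have : 0 ≤ (A *ᵥ v) i := Finset.sum_nonneg fun j _ => by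
    rcases eq_or_ne i j with rfl | hij
    · simp [← hvi]
    · exact mul_nonneg (hM i j hij) (hv j)
  norm_num [hAv] at this

theorem isHurwitz_of_mulVec_neg (hM : IsMetzler' A) {v : n → ℝ} (hv : ∀ i, 0 < v i)
    (hAv : ∀ i, (A *ᵥ v) i < 0) : IsHurwitz' A := by
  intro μ hμ
  set D : (Matrix n n ℂ)ˣ := ⟨diagonal fun i => (v i : ℂ), diagonal fun i => ((v i)⁻¹ : ℂ),
    by simp [(hv _).ne'], by simp [(hv _).ne']⟩
  set C : Matrix n n ℂ := of fun i j => ((A i j * v j / v i : ℝ) : ℂ)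
  have hC : ((D⁻¹ : (Matrix n n ℂ)ˣ) : Matrix n n ℂ) * A.map (↑) * (D : Matrix n n ℂ) = C := by
    ext i j
    simp only [Units.inv_mk, mul_diagonal, diagonal_mul, map_apply, Complex.ofReal_div,
      Complex.ofReal_mul, of_apply, D, C]
    ring
  rw [← spectrum.units_conjugate' (u := D), hC, ← spectrum_toLin',
    ← Module.End.hasEigenvalue_iff_mem_spectrum] at hμ
  obtain ⟨k, hk⟩ := eigenvalue_mem_ball hμ
  have hre : μ.re - (C k k).re ≤ dist μ (C k k) := by
    rw [Complex.dist_eq, ← Complex.sub_re]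
    exact Complex.re_le_norm _
  have hdiag : (C k k).re = A k k := by simp [C, (hv k).ne']
  have hoff : ∑ j ∈ Finset.univ.erase k, ‖C k j‖ = ∑ j ∈ Finset.univ.erase k, A k j * v j / v k :=
    Finset.sum_congr rfl fun j hj => by
      have := hM k j (Finset.ne_of_mem_erase hj).symm
      simp only [C, of_apply, Complex.norm_real, Real.norm_eq_abs]
      exact abs_of_nonneg (by have := hv j; have := hv k; positivity)
  have hrow : A k k + ∑ j ∈ Finset.univ.erase k, A k j * v j / v k = (A *ᵥ v) k / v k := by
    rw [mulVec, dotProduct, ← Finset.add_sum_erase _ _ (Finset.mem_univ k), add_div,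
      Finset.sum_div, mul_div_cancel_right₀ _ (hv k).ne']
  linarith [Metric.mem_closedBall.1 hk, div_neg_of_neg_of_pos (hAv k) (hv k)]

theorem isHurwitz_iff_exists_pos_mulVec_neg (hM : IsMetzler' A) :
    IsHurwitz' A ↔ ∃ v : n → ℝ, (∀ i, 0 < v i) ∧ ∀ i, (A *ᵥ v) i < 0 :=
  ⟨hM.exists_pos_mulVec_neg, fun ⟨_, hv, hAv⟩ => hM.isHurwitz_of_mulVec_neg hv hAv⟩

end IsMetzler'

section Blocks

variable {m : Type*} [Fintype m] {M11 : Matrix n n ℝ} {M12 : Matrix n m ℝ}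
  {M21 : Matrix m n ℝ} {M22 : Matrix m m ℝ}

theorem IsMetzler'.fromBlocks [DecidableEq m] (h11 : IsMetzler' M11) (h22 : IsMetzler' M22)
    (h12 : ∀ i j, 0 ≤ M12 i j) (h21 : ∀ i j, 0 ≤ M21 i j) :
    IsMetzler' (fromBlocks M11 M12 M21 M22) := by
  rintro (i | i) (j | j) hij
  · exact h11 i j fun h => hij (congrArg _ h)
  · exact h12 i j
  · exact h21 i j
  · exact h22 i j fun h => hij (congrArg _ h)

theorem IsMetzler'.sub_mul_inv_mul [DecidableEq m] (h22 : IsMetzler' M22)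
    (h12 : ∀ i j, 0 ≤ M12 i j) (h21 : ∀ i j, 0 ≤ M21 i j) (hinv : ∀ i j, M11⁻¹ i j ≤ 0) :
    IsMetzler' (M22 - M21 * M11⁻¹ * M12) := by
  intro i j hij
  have := mul_apply_nonneg
    (mul_apply_nonneg (Q := -M11⁻¹) h21 fun a b => neg_nonneg.2 (hinv a b)) h12 i j
  rw [Matrix.mul_neg, Matrix.neg_mul, Matrix.neg_apply, neg_nonneg] at this
  rw [Matrix.sub_apply]
  linarith [h22 i j hij]

theorem sub_mul_inv_mul_mulVec_neg (hdet : IsUnit M11.det) (hinv : ∀ i j, M11⁻¹ i j ≤ 0)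
    (h21 : ∀ i j, 0 ≤ M21 i j) {x : n → ℝ} {y : m → ℝ}
    (htop : ∀ i, (M11 *ᵥ x + M12 *ᵥ y) i < 0) (hbot : ∀ i, (M21 *ᵥ x + M22 *ᵥ y) i < 0) :
    ∀ i, ((M22 - M21 * M11⁻¹ * M12) *ᵥ y) i < 0 := by
  set w := M11 *ᵥ x + M12 *ᵥ y
  have hinvw : 0 ≤ M11⁻¹ *ᵥ w := by
    have := mulVec_nonneg_of_nonneg (P := -M11⁻¹) (x := -w) (fun a b => neg_nonneg.2 (hinv a b))
      fun i => neg_nonneg.2 (htop i).le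
    rwa [neg_mulVec, mulVec_neg, neg_neg] at this
  have hsplit : (M22 - M21 * M11⁻¹ * M12) *ᵥ y = (M21 *ᵥ x + M22 *ᵥ y) - M21 *ᵥ (M11⁻¹ *ᵥ w) := by
    rw [mulVec_add M11⁻¹, mulVec_mulVec, nonsing_inv_mul _ hdet, one_mulVec]
    simp only [sub_mulVec, mulVec_add, ← mulVec_mulVec]
    abel
  intro i
  rw [hsplit, Pi.sub_apply]
  linarith [hbot i, show (0 : ℝ) ≤ _ from mulVec_nonneg_of_nonneg h21 hinvw i]

theorem exists_pos_fromBlocks_mulVec_neg (hdet : IsUnit M11.det) (hinv : ∀ i j, M11⁻¹ i j ≤ 0)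
    (h12 : ∀ i j, 0 ≤ M12 i j) {x : n → ℝ} {y : m → ℝ} (hx : ∀ i, 0 < x i)
    (hM11x : ∀ i, (M11 *ᵥ x) i < 0) (hy : ∀ i, 0 < y i)
    (hSy : ∀ i, ((M22 - M21 * M11⁻¹ * M12) *ᵥ y) i < 0) :
    ∃ x' y', (∀ i, 0 < x' i) ∧ (∀ i, 0 < y' i) ∧ (∀ i, (M11 *ᵥ x' + M12 *ᵥ y') i < 0) ∧
      ∀ i, (M21 *ᵥ x' + M22 *ᵥ y') i < 0 := by
  obtain ⟨ε, hε, hεS⟩ : ∃ ε > 0, ∀ i, ((M22 - M21 * M11⁻¹ * M12) *ᵥ y) i + ε * (M21 *ᵥ x) i < 0 :=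
    Eventually.exists_gt <| eventually_all.2 fun i =>
      ((continuous_const.add (continuous_id.mul continuous_const)).tendsto' 0 _ (by simp))
        |>.eventually (gt_mem_nhds (hSy i))
  set z := -M11⁻¹ *ᵥ (M12 *ᵥ y)
  have hz : 0 ≤ z := mulVec_nonneg_of_nonneg (fun a b => neg_nonneg.2 (hinv a b))
    (mulVec_nonneg_of_nonneg h12 fun i => (hy i).le)
  have htop : M11 *ᵥ (ε • x + z) + M12 *ᵥ y = ε • (M11 *ᵥ x) := by
    rw [mulVec_add, mulVec_smul, mulVec_mulVec, mul_neg, mul_nonsing_inv _ hdet, neg_mulVec,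
      one_mulVec, neg_add_cancel_right]
  have hbot : M21 *ᵥ (ε • x + z) + M22 *ᵥ y =
      (M22 - M21 * M11⁻¹ * M12) *ᵥ y + ε • (M21 *ᵥ x) := by
    rw [mulVec_add, mulVec_smul, mulVec_mulVec, mulVec_mulVec, Matrix.mul_neg, Matrix.neg_mul,
      neg_mulVec, sub_mulVec]
    abel
  refine ⟨ε • x + z, y, fun i => ?_, hy, fun i => ?_, fun i => ?_⟩
  · simpa using add_pos_of_pos_of_nonneg (mul_pos hε (hx i)) (hz i)
  · rw [htop]
    simpa using mul_neg_of_pos_of_neg hε (hM11x i)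
  · rw [hbot]
    simpa using hεS i

end Blocks

end Metzler

/-- Schur-complement characterization of Hurwitz stability for Metzler block
matrices: `[[M₁₁,M₁₂],[M₂₁,M₂₂]]` with Metzler diagonal blocks and nonnegative
off-diagonal blocks is Hurwitz stable iff `M₁₁` and the Schur complement
`M₂₂ - M₂₁ M₁₁⁻¹ M₁₂` are Hurwitz stable. -/
theorem metzler_schur_complement {n m : ℕ}
    (M11 : Matrix (Fin n) (Fin n) ℝ) (M12 : Matrix (Fin n) (Fin m) ℝ)
    (M21 : Matrix (Fin m) (Fin n) ℝ) (M22 : Matrix (Fin m) (Fin m) ℝ)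
    (h11 : IsMetzler' M11) (h22 : IsMetzler' M22)
    (h12 : ∀ i j, 0 ≤ M12 i j) (h21 : ∀ i j, 0 ≤ M21 i j) :
    IsHurwitz' (Matrix.fromBlocks M11 M12 M21 M22) ↔
      (IsHurwitz' M11 ∧ IsHurwitz' (M22 - M21 * M11⁻¹ * M12)) := by
  rw [(h11.fromBlocks h22 h12 h21).isHurwitz_iff_exists_pos_mulVec_neg,
    exists_pos_fromBlocks_mulVec_neg_iff]
  constructor
  · rintro ⟨x, y, hx, hy, htop, hbot⟩
    have hH11 : IsHurwitz' M11 := h11.isHurwitz_of_mulVec_neg hx fun i =>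
      (le_add_of_nonneg_right (mulVec_nonneg_of_nonneg h12 (fun j => (hy j).le) i)).trans_lt
        (htop i)
    have hinv := h11.inv_nonpos hH11
    exact ⟨hH11, (h22.sub_mul_inv_mul h12 h21 hinv).isHurwitz_of_mulVec_neg hy
      (sub_mul_inv_mul_mulVec_neg hH11.isUnit_det hinv h21 htop hbot)⟩
  · rintro ⟨hH11, hHS⟩
    have hinv := h11.inv_nonpos hH11
    obtain ⟨x, hx, hM11x⟩ := h11.exists_pos_mulVec_neg hH11
    obtain ⟨y, hy, hSy⟩ := (h22.sub_mul_inv_mul h12 h21 hinv).exists_pos_mulVec_neg hHS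
    exact exists_pos_fromBlocks_mulVec_neg hH11.isUnit_det hinv h12 hx hM11x hy hSy
end
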